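/- arXiv:0907.1194 — 7 statements merged into one kernel-verified Lean document; each statement's English description precedes it below -/
import Mathlib

section
/- Let X be a complex Banach space and f : 𝔻 → X a bounded holomorphic map with f(0) ∈ B_X (the open unit ball) and f(𝔻) contained in the closed unit ball of X. If g(ζ) := f(0) + (1/2) f'(0) ζ, then g maps 𝔻 into the closed unit ball of X; more precisely, g(ζ) = (1/2π) ∫₀^{2π} f(e^{iθ}ζ)(1 + cos θ) dθ for all ζ ∈ 𝔻. -/
open Metric Set Complex

private lemma I_smul_cancel {X : Type*} [AddCommGroup X] [Module ℂ X] {x y : X}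
    (h : I • x = I • y) : x = y := by
  have h2 := congrArg (fun z : X => (I : ℂ)⁻¹ • z) h
  simpa [smul_smul, inv_mul_cancel₀ Complex.I_ne_zero] using h2

private lemma real_smul_eq {X : Type*} [AddCommGroup X] [Module ℂ X] (r : ℝ) (x : X) :
    r • x = (r : ℂ) • x := (Complex.coe_smul r x).symm

private lemma key_integral {X : Type*} [NormedAddCommGroup X] [NormedSpace ℂ X] [CompleteSpace X]
    {F : ℂ → X} (hd : DifferentiableOn ℂ F (closedBall 0 1)) :
    (∫ θ in (0 : ℝ)..(2 * Real.pi), (1 + Real.cos θ) • F (Complex.exp (θ * I))) =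
      ((2 * Real.pi : ℝ) : ℂ) • F 0 + ((Real.pi : ℝ) : ℂ) • deriv F 0 := by
  have hI : (I : ℂ) ≠ 0 := I_ne_zero
  have hmem : ∀ θ : ℝ, Complex.exp (θ * I) ∈ closedBall (0 : ℂ) 1 := fun θ => by
    simp [mem_closedBall_zero_iff, Complex.norm_exp_ofReal_mul_I]
  have hexp : Continuous fun θ : ℝ => Complex.exp ((θ : ℂ) * I) :=
    (Complex.continuous_ofReal.mul continuous_const).cexp
  have hexpne : ∀ θ : ℝ, Complex.exp ((θ : ℂ) * I) ≠ 0 := fun θ => Complex.exp_ne_zero _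
  have hcF : Continuous fun θ : ℝ => F (Complex.exp ((θ : ℂ) * I)) :=
    hd.continuousOn.comp_continuous hexp hmem
  have hcm : ∀ θ : ℝ, circleMap 0 1 θ = Complex.exp ((θ : ℂ) * I) := fun θ => by
    simp [circleMap]
  -- the three basic integrals
  set A := ∫ θ in (0 : ℝ)..(2 * Real.pi), F (Complex.exp ((θ : ℂ) * I)) with hA_def
  set B := ∫ θ in (0 : ℝ)..(2 * Real.pi),
      (Complex.exp ((θ : ℂ) * I))⁻¹ • F (Complex.exp ((θ : ℂ) * I)) with hB_def
  set C := ∫ θ in (0 : ℝ)..(2 * Real.pi),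
      Complex.exp ((θ : ℂ) * I) • F (Complex.exp ((θ : ℂ) * I)) with hC_def
  have hiA : IntervalIntegrable (fun θ : ℝ => F (Complex.exp ((θ : ℂ) * I)))
      MeasureTheory.volume 0 (2 * Real.pi) := hcF.intervalIntegrable _ _
  have hiB : IntervalIntegrable
      (fun θ : ℝ => (Complex.exp ((θ : ℂ) * I))⁻¹ • F (Complex.exp ((θ : ℂ) * I)))
      MeasureTheory.volume 0 (2 * Real.pi) :=
    ((hexp.inv₀ hexpne).smul hcF).intervalIntegrable _ _
  have hiC : IntervalIntegrable
      (fun θ : ℝ => Complex.exp ((θ : ℂ) * I) • F (Complex.exp ((θ : ℂ) * I)))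
      MeasureTheory.volume 0 (2 * Real.pi) :=
    (hexp.smul hcF).intervalIntegrable _ _
  -- C = 0 by Cauchy-Goursat
  have hC : C = 0 := by
    have h0 : (∮ z in C(0, 1), F z) = 0 :=
      Complex.circleIntegral_eq_zero_of_differentiable_on_off_countable zero_le_one
        countable_empty hd.continuousOn (fun z hz =>
          hd.differentiableAt
            (Filter.mem_of_superset (isOpen_ball.mem_nhds hz.1) ball_subset_closedBall))
    have : (∮ z in C(0, 1), F z) = I • C := by
      rw [circleIntegral, hC_def, ← intervalIntegral.integral_smul]
      refine intervalIntegral.integral_congr fun θ _ => ?_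
      simp only [deriv_circleMap, hcm]
      rw [smul_smul, mul_comm]
    rw [this] at h0
    exact (smul_eq_zero_iff_right hI).mp h0
  -- A = 2π • F 0 by the Cauchy integral formula
  have hA : A = ((2 * Real.pi : ℝ) : ℂ) • F 0 := by
    have h0 : (∮ z in C(0, 1), (z - 0)⁻¹ • F z) = (2 * Real.pi * I : ℂ) • F 0 :=
      (hd.mono closure_ball_subset_closedBall).diffContOnCl.circleIntegral_sub_inv_smul
        (mem_ball_self one_pos)
    have h1 : (∮ z in C(0, 1), (z - 0)⁻¹ • F z) = I • A := by
      rw [circleIntegral, hA_def, ← intervalIntegral.integral_smul]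
      refine intervalIntegral.integral_congr fun θ _ => ?_
      simp only [deriv_circleMap, hcm, sub_zero]
      rw [smul_smul]
      congr 1
      field_simp [hexpne θ]
      try ring
    rw [h1] at h0
    apply I_smul_cancel
    rw [h0, smul_smul]
    congr 1
    push_cast
    ring
  -- B = 2π • deriv F 0 via the Cauchy power series
  have hB : B = ((2 * Real.pi : ℝ) : ℂ) • deriv F 0 := by
    have hps : HasFPowerSeriesOnBall F (cauchyPowerSeries F 0 1) 0 1 := by
      have := hd.hasFPowerSeriesOnBall (R := 1) one_pos
      simpa using this
    have hder : deriv F 0 = cauchyPowerSeries F 0 1 1 fun _ => 1 :=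
      hps.hasFPowerSeriesAt.deriv
    rw [cauchyPowerSeries_apply] at hder
    have h1 : (∮ z in C(0, 1), ((1 : ℂ) / (z - 0)) ^ 1 • (z - 0)⁻¹ • F z) = I • B := by
      rw [circleIntegral, hB_def, ← intervalIntegral.integral_smul]
      refine intervalIntegral.integral_congr fun θ _ => ?_
      simp only [deriv_circleMap, hcm, sub_zero, pow_one, one_div]
      rw [smul_smul, smul_smul, smul_smul]
      congr 1
      field_simp [hexpne θ]
      try ring
    rw [h1] at hder
    have h2 : (2 * (Real.pi : ℂ) * I) ≠ 0 := by
      simp [Real.pi_ne_zero, I_ne_zero]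
    have hc : ((2 * Real.pi : ℝ) : ℂ) * (2 * ↑Real.pi * I)⁻¹ * I = 1 := by
      push_cast
      rw [show 2 * (Real.pi : ℂ) * (2 * (Real.pi : ℂ) * I)⁻¹ * I =
        2 * (Real.pi : ℂ) * I * (2 * (Real.pi : ℂ) * I)⁻¹ from by ring,
        mul_inv_cancel₀ h2]
    rw [hder, smul_smul, smul_smul, hc, one_smul]
  -- pointwise decomposition of the integrand
  have hpt : ∀ θ : ℝ, (1 + Real.cos θ) • F (Complex.exp ((θ : ℂ) * I)) =
      F (Complex.exp ((θ : ℂ) * I)) +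
        ((2⁻¹ : ℂ) • Complex.exp ((θ : ℂ) * I) • F (Complex.exp ((θ : ℂ) * I)) +
          (2⁻¹ : ℂ) • (Complex.exp ((θ : ℂ) * I))⁻¹ • F (Complex.exp ((θ : ℂ) * I))) := by
    intro θ
    rw [real_smul_eq]
    have hco : ((1 + Real.cos θ : ℝ) : ℂ) =
        1 + (2⁻¹ * Complex.exp ((θ : ℂ) * I) + 2⁻¹ * (Complex.exp ((θ : ℂ) * I))⁻¹) := by
      have hcos : Complex.cos ((θ : ℂ)) =
          (Complex.exp ((θ : ℂ) * I) + Complex.exp (-((θ : ℂ)) * I)) / 2 := rfl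
      push_cast
      rw [hcos, show (-((θ : ℂ))) * I = -((θ : ℂ) * I) by ring, Complex.exp_neg]
      ring
    rw [hco, add_smul, add_smul, one_smul, mul_smul, mul_smul]
  calc (∫ θ in (0 : ℝ)..(2 * Real.pi), (1 + Real.cos θ) • F (Complex.exp ((θ : ℂ) * I)))
      = ∫ θ in (0 : ℝ)..(2 * Real.pi),
          (F (Complex.exp ((θ : ℂ) * I)) +
            ((2⁻¹ : ℂ) • Complex.exp ((θ : ℂ) * I) • F (Complex.exp ((θ : ℂ) * I)) +
              (2⁻¹ : ℂ) • (Complex.exp ((θ : ℂ) * I))⁻¹ • F (Complex.exp ((θ : ℂ) * I)))) :=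
        intervalIntegral.integral_congr fun θ _ => hpt θ
    _ = A + ((2⁻¹ : ℂ) • C + (2⁻¹ : ℂ) • B) := by
        have hiC2 : IntervalIntegrable
            (fun θ : ℝ => (2⁻¹ : ℂ) • Complex.exp ((θ : ℂ) * I) • F (Complex.exp ((θ : ℂ) * I)))
            MeasureTheory.volume 0 (2 * Real.pi) :=
          (continuous_const.smul (hexp.smul hcF)).intervalIntegrable _ _
        have hiB2 : IntervalIntegrable
            (fun θ : ℝ =>
              (2⁻¹ : ℂ) • (Complex.exp ((θ : ℂ) * I))⁻¹ • F (Complex.exp ((θ : ℂ) * I)))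
            MeasureTheory.volume 0 (2 * Real.pi) :=
          (continuous_const.smul ((hexp.inv₀ hexpne).smul hcF)).intervalIntegrable _ _
        rw [intervalIntegral.integral_add hiA (hiC2.add hiB2),
          intervalIntegral.integral_add hiC2 hiB2,
          intervalIntegral.integral_smul, intervalIntegral.integral_smul]
    _ = ((2 * Real.pi : ℝ) : ℂ) • F 0 + ((Real.pi : ℝ) : ℂ) • deriv F 0 := by
        rw [hA, hB, hC, smul_zero, zero_add, smul_smul]
        congr 2
        push_cast
        ring

theorem stmt1 {X : Type*} [NormedAddCommGroup X] [NormedSpace ℂ X] [CompleteSpace X]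
    (f : ℂ → X) (hf : DifferentiableOn ℂ f (ball 0 1))
    (hbdd : Bornology.IsBounded (f '' ball 0 1))
    (h0 : f 0 ∈ ball (0 : X) 1)
    (hmap : MapsTo f (ball (0 : ℂ) 1) (closedBall (0 : X) 1))
    (g : ℂ → X) (hg : ∀ ζ, g ζ = f 0 + (ζ / 2) • derivWithin f (ball 0 1) 0) :
    MapsTo g (ball (0 : ℂ) 1) (closedBall (0 : X) 1) ∧
      ∀ ζ ∈ ball (0 : ℂ) 1,
        g ζ = (2 * Real.pi)⁻¹ •
          ∫ θ in (0 : ℝ)..(2 * Real.pi), (1 + Real.cos θ) • f (Complex.exp (θ * I) * ζ) := by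
  have h0mem : (0 : ℂ) ∈ ball (0 : ℂ) 1 := mem_ball_self one_pos
  have hderW : derivWithin f (ball 0 1) 0 = deriv f 0 := derivWithin_of_isOpen isOpen_ball h0mem
  have hfat : DifferentiableAt ℂ f 0 := hf.differentiableAt (isOpen_ball.mem_nhds h0mem)
  have main : ∀ ζ ∈ ball (0 : ℂ) 1,
      g ζ = (2 * Real.pi)⁻¹ •
        ∫ θ in (0 : ℝ)..(2 * Real.pi), (1 + Real.cos θ) • f (Complex.exp (θ * I) * ζ) := by
    intro ζ hζ
    rw [mem_ball_zero_iff] at hζ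
    have hmapsto : ∀ w : ℂ, w ∈ closedBall (0 : ℂ) 1 → w * ζ ∈ ball (0 : ℂ) 1 := by
      intro w hw
      rw [mem_closedBall_zero_iff] at hw
      rw [mem_ball_zero_iff, norm_mul]
      calc ‖w‖ * ‖ζ‖ ≤ 1 * ‖ζ‖ := by
            exact mul_le_mul_of_nonneg_right hw (norm_nonneg _)
        _ < 1 := by rwa [one_mul]
    have hd : DifferentiableOn ℂ (fun w => f (w * ζ)) (closedBall 0 1) := by
      exact hf.comp ((differentiable_id.mul_const ζ).differentiableOn) hmapsto
    have hkey := key_integral hd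
    have hF0 : f ((0 : ℂ) * ζ) = f 0 := by rw [zero_mul]
    have hderF : deriv (fun w => f (w * ζ)) 0 = ζ • deriv f 0 := by
      have h1 : HasDerivAt (fun w : ℂ => w * ζ) ζ 0 := by
        simpa using (hasDerivAt_id (0 : ℂ)).mul_const ζ
      have h2 : HasDerivAt f (deriv f 0) ((0 : ℂ) * ζ) := by
        rw [zero_mul]; exact hfat.hasDerivAt
      have := HasDerivAt.scomp (x := (0 : ℂ)) h2 h1
      exact this.deriv
    rw [hkey, hF0, hderF, hg, hderW]
    rw [real_smul_eq, smul_add, smul_smul, smul_smul, smul_smul]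
    have hpi : ((2 * Real.pi : ℝ) : ℂ) ≠ 0 := by
      push_cast; simp [Real.pi_ne_zero]
    congr 1
    · rw [← Complex.ofReal_mul, inv_mul_cancel₀ (by positivity : (2 * Real.pi) ≠ 0),
        Complex.ofReal_one, one_smul]
    · congr 1
      push_cast
      field_simp
  refine ⟨?_, main⟩
  intro ζ hζ
  rw [mem_closedBall_zero_iff]
  have hζ' := hζ
  rw [mem_ball_zero_iff] at hζ'
  rw [main ζ hζ]
  have hmem : ∀ θ : ℝ, Complex.exp ((θ : ℂ) * I) * ζ ∈ ball (0 : ℂ) 1 := fun θ => by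
    rw [mem_ball_zero_iff, norm_mul]
    simp only [Complex.norm_exp_ofReal_mul_I, one_mul]
    exact hζ'
  have hcont : Continuous fun θ : ℝ => f (Complex.exp ((θ : ℂ) * I) * ζ) := by
    refine hf.continuousOn.comp_continuous ?_ (fun θ => hmem θ)
    exact ((Complex.continuous_ofReal.mul continuous_const).cexp).mul continuous_const
  have hbound : ∀ θ : ℝ, ‖(1 + Real.cos θ) • f (Complex.exp ((θ : ℂ) * I) * ζ)‖ ≤
      1 + Real.cos θ := by
    intro θ
    have h1 : (0 : ℝ) ≤ 1 + Real.cos θ := by nlinarith [Real.neg_one_le_cos θ]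
    rw [norm_smul, Real.norm_eq_abs, _root_.abs_of_nonneg h1]
    have h2 : ‖f (Complex.exp ((θ : ℂ) * I) * ζ)‖ ≤ 1 := by
      have := hmap (hmem θ)
      rwa [mem_closedBall_zero_iff] at this
    calc (1 + Real.cos θ) * ‖f (Complex.exp ((θ : ℂ) * I) * ζ)‖ ≤ (1 + Real.cos θ) * 1 :=
          mul_le_mul_of_nonneg_left h2 h1
      _ = 1 + Real.cos θ := mul_one _
  have hnormint : ‖∫ θ in (0 : ℝ)..(2 * Real.pi),
      (1 + Real.cos θ) • f (Complex.exp ((θ : ℂ) * I) * ζ)‖ ≤ 2 * Real.pi := by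
    have h1 : ‖∫ θ in (0 : ℝ)..(2 * Real.pi),
        (1 + Real.cos θ) • f (Complex.exp ((θ : ℂ) * I) * ζ)‖ ≤
        ∫ θ in (0 : ℝ)..(2 * Real.pi), ‖(1 + Real.cos θ) • f (Complex.exp ((θ : ℂ) * I) * ζ)‖ :=
      intervalIntegral.norm_integral_le_integral_norm Real.two_pi_pos.le
    have h2 : (∫ θ in (0 : ℝ)..(2 * Real.pi),
        ‖(1 + Real.cos θ) • f (Complex.exp ((θ : ℂ) * I) * ζ)‖) ≤
        ∫ θ in (0 : ℝ)..(2 * Real.pi), (1 + Real.cos θ) := by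
      apply intervalIntegral.integral_mono_on Real.two_pi_pos.le
      · exact (((continuous_const.add Real.continuous_cos).smul hcont).norm).intervalIntegrable _ _
      · exact (continuous_const.add Real.continuous_cos).intervalIntegrable _ _
      · exact fun θ _ => hbound θ
    have h3 : (∫ θ in (0 : ℝ)..(2 * Real.pi), (1 + Real.cos θ)) = 2 * Real.pi := by
      rw [intervalIntegral.integral_add (intervalIntegrable_const)
        (Real.continuous_cos.intervalIntegrable _ _)]
      simp [Real.sin_two_pi]
    linarith
  rw [norm_smul, Real.norm_eq_abs, _root_.abs_of_nonneg (by positivity : (0:ℝ) ≤ (2 * Real.pi)⁻¹)]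
  calc (2 * Real.pi)⁻¹ * ‖∫ θ in (0 : ℝ)..(2 * Real.pi),
      (1 + Real.cos θ) • f (Complex.exp ((θ : ℂ) * I) * ζ)‖ ≤
      (2 * Real.pi)⁻¹ * (2 * Real.pi) := by
        exact mul_le_mul_of_nonneg_left hnormint (by positivity)
    _ = 1 := by
        rw [inv_mul_cancel₀ (by positivity)]
end

section
/- Let D be a convex bounded domain in a complex Banach space X, z ∈ D, v ∈ X nonzero. Define δ_D(z, v/‖v‖) = sup{ r > 0 : z + r (v/‖v‖) 𝔻 ⊆ D } and let δ_D(ε) = sup{ δ_D(z,u) : z ∈ D, dist(z, ∂D) ≤ ε, ‖u‖ = 1 }. Then the Carathéodory infinitesimal metric satisfies c_D(z, v) ≥ ‖v‖ / (2 δ_D(ε)) where ε = dist(z, ∂D). -/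
open Metric Set

/-- `δ_D(z, u)`: the supremum of radii `r > 0` such that the disc `z + r u 𝔻` lies in `D`. -/
noncomputable def discRadius {X : Type*} [NormedAddCommGroup X] [NormedSpace ℂ X]
    (D : Set X) (z u : X) : ℝ :=
  sSup {r : ℝ | 0 < r ∧ ∀ ζ ∈ ball (0 : ℂ) 1, z + ((r : ℂ) * ζ) • u ∈ D}

/-- `δ_D(ε)`: the modulus of complex convexity of `D`. -/
noncomputable def modCC {X : Type*} [NormedAddCommGroup X] [NormedSpace ℂ X]
    (D : Set X) (ε : ℝ) : ℝ :=
  sSup {d : ℝ | ∃ z ∈ D, ∃ u : X, ‖u‖ = 1 ∧ infDist z (frontier D) ≤ ε ∧ d = discRadius D z u}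

/-- The Carathéodory infinitesimal metric `c_D(p, v)`. -/
noncomputable def carathInf {X : Type*} [NormedAddCommGroup X] [NormedSpace ℂ X]
    (D : Set X) (p v : X) : ℝ :=
  sSup {r : ℝ | ∃ f : X → ℂ, DifferentiableOn ℂ f D ∧ MapsTo f D (ball (0 : ℂ) 1) ∧
    r = ‖fderivWithin ℂ f D p v‖}

theorem stmt2 {X : Type*} [NormedAddCommGroup X] [NormedSpace ℂ X]
    (D : Set X) (hD : IsOpen D) (hDc : Convex ℝ D) (hDb : Bornology.IsBounded D)
    (z : X) (hz : z ∈ D) (v : X) (hv : v ≠ 0) :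
    carathInf D z v ≥ ‖v‖ / (2 * modCC D (infDist z (frontier D))) := by
  classical
  have hvpos : (0 : ℝ) < ‖v‖ := norm_pos_iff.2 hv
  set u : X := ((‖v‖ : ℂ))⁻¹ • v with hu_def
  have hu : ‖u‖ = 1 := by
    rw [hu_def, norm_smul, norm_inv, Complex.norm_real, Real.norm_eq_abs,
      abs_of_pos hvpos, inv_mul_cancel₀ hvpos.ne']
  obtain ⟨C, hC⟩ := hDb.subset_closedBall 0
  -- boundedness and nonemptiness of the discRadius sets
  have hSbdd : ∀ z' ∈ D, ∀ u' : X, ‖u'‖ = 1 →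
      ∀ r ∈ {r : ℝ | 0 < r ∧ ∀ ζ ∈ ball (0 : ℂ) 1, z' + ((r : ℂ) * ζ) • u' ∈ D}, r ≤ 4 * C := by
    intro z' hz' u' hu' r hr
    have hhalf : (1/2 : ℂ) ∈ ball (0 : ℂ) 1 := by
      simp [mem_ball, Complex.dist_eq]
      norm_num
    have h1 := hr.2 (1/2) hhalf
    have h2 : ‖z' + ((r : ℂ) * (1/2)) • u'‖ ≤ C := by
      simpa [Metric.mem_closedBall] using hC h1
    have h3 : ‖z'‖ ≤ C := by simpa [Metric.mem_closedBall] using hC hz'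
    have h4 : ‖((r : ℂ) * (1/2)) • u'‖ = r / 2 := by
      rw [norm_smul, hu', mul_one, norm_mul, Complex.norm_real, Real.norm_eq_abs,
        abs_of_pos hr.1]
      have h12 : ‖(1/2 : ℂ)‖ = 1/2 := by norm_num [norm_div]
      rw [h12]; ring
    have h5 : ‖((r : ℂ) * (1/2)) • u'‖ ≤ ‖z' + ((r : ℂ) * (1/2)) • u'‖ + ‖z'‖ := by
      simpa using norm_sub_le (z' + ((r : ℂ) * (1/2)) • u') z'
    rw [h4] at h5
    linarith
  have hSne : ∀ z' ∈ D, ∀ u' : X, ‖u'‖ = 1 → ∃ ρ > 0,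
      ρ ∈ {r : ℝ | 0 < r ∧ ∀ ζ ∈ ball (0 : ℂ) 1, z' + ((r : ℂ) * ζ) • u' ∈ D} := by
    intro z' hz' u' hu'
    obtain ⟨ρ, hρ0, hρ⟩ := Metric.isOpen_iff.1 hD z' hz'
    refine ⟨ρ, hρ0, hρ0, fun ζ hζ => ?_⟩
    apply hρ
    have hζ1 : ‖ζ‖ < 1 := by simpa [mem_ball] using hζ
    have : ‖((ρ : ℂ) * ζ) • u'‖ < ρ := by
      rw [norm_smul, hu', mul_one, norm_mul, Complex.norm_real, Real.norm_eq_abs,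
        abs_of_pos hρ0]
      exact mul_lt_of_lt_one_right hρ0 hζ1
    simpa [mem_ball, dist_eq_norm] using this
  have key : ∀ z' ∈ D, ∀ u' : X, ‖u'‖ = 1 →
      0 < discRadius D z' u' ∧ discRadius D z' u' ≤ 4 * C := by
    intro z' hz' u' hu'
    obtain ⟨ρ, hρ0, hρS⟩ := hSne z' hz' u' hu'
    constructor
    · exact hρ0.trans_le (le_csSup ⟨4 * C, fun r hr => hSbdd z' hz' u' hu' r hr⟩ hρS)
    · exact csSup_le ⟨ρ, hρS⟩ (hSbdd z' hz' u' hu')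
  set ε := infDist z (frontier D) with hε_def
  set δ := discRadius D z u with hδ_def
  have hδpos : 0 < δ := (key z hz u hu).1
  set M := modCC D ε with hM_def
  have hTbdd : BddAbove {d : ℝ | ∃ z' ∈ D, ∃ u' : X, ‖u'‖ = 1 ∧
      infDist z' (frontier D) ≤ ε ∧ d = discRadius D z' u'} := by
    refine ⟨4 * C, ?_⟩
    rintro d ⟨z', hz', u', hu', -, rfl⟩
    exact (key z' hz' u' hu').2
  have hδM : δ ≤ M := le_csSup hTbdd ⟨z, hz, u, hu, le_rfl, hδ_def⟩
  have hMpos : 0 < M := hδpos.trans_le hδM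
  obtain ⟨ρ, hρ0, hρ⟩ := Metric.isOpen_iff.1 hD z hz
  have hCarBdd : BddAbove {r : ℝ | ∃ f : X → ℂ, DifferentiableOn ℂ f D ∧
      MapsTo f D (ball (0 : ℂ) 1) ∧ r = ‖fderivWithin ℂ f D z v‖} := by
    refine ⟨2 / (ρ / ‖v‖), ?_⟩
    rintro r ⟨f, hf, hmap, rfl⟩
    have hfz : DifferentiableAt ℂ f z := hf.differentiableAt (hD.mem_nhds hz)
    rw [fderivWithin_of_isOpen hD hz]
    have hsub : ∀ ζ : ℂ, ζ ∈ ball (0 : ℂ) (ρ / ‖v‖) → z + ζ • v ∈ D := by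
      intro ζ hζ
      apply hρ
      have h1 : ‖ζ‖ < ρ / ‖v‖ := by simpa [mem_ball] using hζ
      have h2 : ‖ζ • v‖ < ρ := by
        rw [norm_smul]
        calc ‖ζ‖ * ‖v‖ < (ρ / ‖v‖) * ‖v‖ := by gcongr
          _ = ρ := by field_simp
      simpa [mem_ball, dist_eq_norm] using h2
    set g : ℂ → ℂ := fun ζ => f (z + ζ • v) with hg_def
    have hinner : ∀ ζ : ℂ, HasDerivAt (fun w : ℂ => z + w • v) v ζ := by
      intro ζ
      simpa using ((hasDerivAt_id ζ).smul_const v).const_add z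
    have hgd : HasDerivAt g (fderiv ℂ f z v) 0 := by
      have h := hfz.hasFDerivAt.comp_hasDerivAt_of_eq 0 (hinner 0) (by simp)
      exact h
    have hgdiff : DifferentiableOn ℂ g (ball 0 (ρ / ‖v‖)) := by
      intro ζ hζ
      have h1 : DifferentiableAt ℂ f (z + ζ • v) :=
        hf.differentiableAt (hD.mem_nhds (hsub ζ hζ))
      exact (h1.comp ζ (hinner ζ).differentiableAt).differentiableWithinAt
    have hmaps : MapsTo g (ball 0 (ρ / ‖v‖)) (ball (g 0) 2) := by
      intro ζ hζ
      have h1 : g ζ ∈ ball (0 : ℂ) 1 := hmap (hsub ζ hζ)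
      have h2 : g 0 ∈ ball (0 : ℂ) 1 := hmap (hsub 0 (by simp [mem_ball]; positivity))
      rw [mem_ball] at h1 h2 ⊢
      calc dist (g ζ) (g 0) ≤ dist (g ζ) 0 + dist 0 (g 0) := dist_triangle _ _ _
        _ < 1 + 1 := by
            rw [dist_comm (0 : ℂ) (g 0)]; exact add_lt_add h1 h2
        _ = 2 := by norm_num
    have hfin := Complex.norm_deriv_le_div_of_mapsTo_ball hgdiff (hmaps.mono_right ball_subset_closedBall) (by positivity)
    rw [hgd.deriv] at hfin
    exact hfin
  have claim : ∀ r : ℝ, δ < r → ‖v‖ / (2 * r) ≤ carathInf D z v := by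
    intro r hr
    have hrpos : 0 < r := hδpos.trans hr
    obtain ⟨ζ₀, hζ₀, hp⟩ : ∃ ζ₀ ∈ ball (0 : ℂ) 1, z + ((r : ℂ) * ζ₀) • u ∉ D := by
      by_contra h
      push_neg at h
      exact absurd (le_csSup ⟨4 * C, hSbdd z hz u hu⟩ ⟨hrpos, h⟩) (not_le.2 hr)
    set p := z + ((r : ℂ) * ζ₀) • u with hp_def
    obtain ⟨L, hL⟩ := RCLike.geometric_hahn_banach_open_point (𝕜 := ℂ) hDc hD hp
    simp only [RCLike.re_to_complex] at hL
    set a : ℂ := L z with ha_def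
    set c : ℝ := (L p).re with hc_def
    have hac : a.re < c := hL z hz
    set b : ℂ := 2 * c - (starRingEnd ℂ) a with hb_def
    have hbre : b.re = 2 * c - a.re := by simp [hb_def]
    have hbim : b.im = a.im := by simp [hb_def]
    have habs : ∀ x ∈ D, ‖L x - a‖ < ‖L x - b‖ := by
      intro x hx
      have hxc : (L x).re < c := hL x hx
      have h1 : ‖L x - a‖ ^ 2 < ‖L x - b‖ ^ 2 := by
        rw [Complex.sq_norm, Complex.sq_norm,
          Complex.normSq_apply, Complex.normSq_apply]
        simp only [Complex.sub_re, Complex.sub_im, hbre, hbim]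
        nlinarith [hxc, hac]
      exact lt_of_pow_lt_pow_left₀ 2 (norm_nonneg _) h1
    have hden : ∀ x ∈ D, L x - b ≠ 0 := fun x hx =>
      norm_pos_iff.1 ((norm_nonneg _).trans_lt (habs x hx))
    set f : X → ℂ := fun x => (L x - a) / (L x - b) with hf_def
    have hfd : DifferentiableOn ℂ f D := by
      rw [hf_def]
      have d1 : DifferentiableOn ℂ (fun x => L x - a) D :=
        (L.differentiable.sub_const a).differentiableOn
      have d2 : DifferentiableOn ℂ (fun x => L x - b) D :=
        (L.differentiable.sub_const b).differentiableOn
      have d3 : DifferentiableOn ℂ (fun x => (L x - a) * (L x - b)⁻¹) D :=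
        d1.mul (d2.inv hden)
      simpa only [div_eq_mul_inv] using d3
    have hmapf : MapsTo f D (ball (0 : ℂ) 1) := by
      intro x hx
      rw [mem_ball, dist_zero_right]
      have : ‖f x‖ = ‖L x - a‖ / ‖L x - b‖ := by rw [hf_def, norm_div]
      rw [this]
      exact (div_lt_one ((norm_nonneg _).trans_lt (habs x hx))).2 (habs x hx)
    have hab : a - b ≠ 0 := hden z hz
    have hgder : HasDerivAt (fun w : ℂ => (w - a) / (w - b)) ((a - b)⁻¹) a := by
      have h1 := ((hasDerivAt_id a).sub_const a).div ((hasDerivAt_id a).sub_const b) hab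
      simp only [id_eq] at h1
      have h2 : (1 * (a - b) - (a - a) * 1) / (a - b) ^ 2 = (a - b)⁻¹ := by
        rw [sub_self a]
        field_simp
        ring
      rwa [h2] at h1
    have hF : HasFDerivAt f ((a - b)⁻¹ • (L : X →L[ℂ] ℂ)) z :=
      hgder.comp_hasFDerivAt z L.hasFDerivAt
    have hval : ‖fderivWithin ℂ f D z v‖ = ‖L v‖ / ‖a - b‖ := by
      rw [fderivWithin_of_isOpen hD hz, hF.fderiv]
      simp [norm_smul, norm_inv, div_eq_inv_mul]
    have habv : ‖a - b‖ = 2 * (c - a.re) := by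
      have h1 : a - b = ((2 * a.re - 2 * c : ℝ) : ℂ) := by
        apply Complex.ext
        · rw [Complex.sub_re, hbre, Complex.ofReal_re]; ring
        · rw [Complex.sub_im, hbim, Complex.ofReal_im]; ring
      rw [h1, Complex.norm_real, Real.norm_eq_abs, abs_of_neg (by linarith)]
      ring
    have hLp : c - a.re = ((r : ℂ) * ζ₀ * ((‖v‖ : ℂ))⁻¹ * L v).re := by
      have h1 : L p = a + ((r : ℂ) * ζ₀ * ((‖v‖ : ℂ))⁻¹) * L v := by
        rw [hp_def, map_add, map_smul, hu_def, map_smul]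
        simp [smul_eq_mul]
        ring
      rw [hc_def, h1, Complex.add_re]
      ring
    have hnormw : ‖(r : ℂ) * ζ₀ * ((‖v‖ : ℂ))⁻¹ * L v‖ ≤ r * ‖v‖⁻¹ * ‖L v‖ := by
      have hζ1 : ‖ζ₀‖ ≤ 1 := le_of_lt (by simpa [mem_ball] using hζ₀)
      rw [norm_mul, norm_mul, norm_mul, Complex.norm_real, Real.norm_eq_abs,
        abs_of_pos hrpos, norm_inv, Complex.norm_real, Real.norm_eq_abs, abs_of_pos hvpos]
      calc r * ‖ζ₀‖ * ‖v‖⁻¹ * ‖L v‖ ≤ r * 1 * ‖v‖⁻¹ * ‖L v‖ := by gcongr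
        _ = r * ‖v‖⁻¹ * ‖L v‖ := by ring
    have hcb : c - a.re ≤ r * ‖v‖⁻¹ * ‖L v‖ := by
      rw [hLp]
      exact (Complex.re_le_norm _).trans hnormw
    have hc0 : 0 < c - a.re := by linarith
    have hLv : 0 < ‖L v‖ := by
      rcases eq_or_lt_of_le (norm_nonneg (L v)) with h | h
      · rw [← h] at hcb; simp at hcb; linarith
      · exact h
    have hfin : ‖v‖ / (2 * r) ≤ ‖L v‖ / (2 * (c - a.re)) := by
      rw [div_le_div_iff₀ (by positivity) (by positivity)]
      calc ‖v‖ * (2 * (c - a.re)) = 2 * ‖v‖ * (c - a.re) := by ring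
        _ ≤ 2 * ‖v‖ * (r * ‖v‖⁻¹ * ‖L v‖) :=
            mul_le_mul_of_nonneg_left hcb (by positivity)
        _ = ‖L v‖ * (2 * r) := by field_simp [hvpos.ne']
    calc ‖v‖ / (2 * r) ≤ ‖L v‖ / (2 * (c - a.re)) := hfin
      _ = ‖fderivWithin ℂ f D z v‖ := by rw [hval, habv]
      _ ≤ carathInf D z v := le_csSup hCarBdd ⟨f, hfd, hmapf, rfl⟩
  have hδle : ‖v‖ / (2 * δ) ≤ carathInf D z v := by
    have hcont : ContinuousAt (fun r : ℝ => ‖v‖ / (2 * r)) δ := by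
      apply ContinuousAt.div continuousAt_const
      · exact (continuous_const.mul continuous_id).continuousAt
      · show (2 : ℝ) * δ ≠ 0
        positivity
    have htend : Filter.Tendsto (fun r : ℝ => ‖v‖ / (2 * r)) (nhdsWithin δ (Ioi δ))
        (nhds (‖v‖ / (2 * δ))) := hcont.tendsto.mono_left nhdsWithin_le_nhds
    exact le_of_tendsto htend (eventually_nhdsWithin_of_forall fun r hr => claim r hr)
  have hfinal : ‖v‖ / (2 * M) ≤ ‖v‖ / (2 * δ) := by
    gcongr
  exact hfinal.trans hδle
end

section
/- Let D be a convex domain in a complex Banach space X, let p ≠ q in D, and suppose φ, ψ : 𝔻 → D are normalized complex geodesics joining p and q (i.e., φ(0) = ψ(0) = p, φ(s) = ψ(s) = q for the same s = tanh C_D(p,q) > 0). Then for every λ ∈ [0,1], the map λφ + (1−λ)ψ is also a normalized complex geodesic joining p and q. -/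
open Metric Set
open Filter Topology

noncomputable def artanh (x : ℝ) : ℝ := Real.log ((1 + x) / (1 - x)) / 2

noncomputable def poincare (z w : ℂ) : ℝ :=
  artanh ‖(z - w) / (1 - (starRingEnd ℂ) w * z)‖

noncomputable def carath {X : Type*} [NormedAddCommGroup X] [NormedSpace ℂ X]
    (D : Set X) (p q : X) : ℝ :=
  sSup {r : ℝ | ∃ f : X → ℂ, DifferentiableOn ℂ f D ∧ MapsTo f D (ball (0 : ℂ) 1) ∧
    r = poincare (f p) (f q)}

def IsComplexGeodesic {X : Type*} [NormedAddCommGroup X] [NormedSpace ℂ X]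
    (D : Set X) (φ : ℂ → X) : Prop :=
  DifferentiableOn ℂ φ (ball 0 1) ∧ MapsTo φ (ball (0 : ℂ) 1) D ∧
    ∀ u ∈ ball (0 : ℂ) 1, ∀ v ∈ ball (0 : ℂ) 1, carath D (φ u) (φ v) = poincare u v

namespace Helpers

lemma tanh_eq (x : ℝ) : Real.tanh x = (Real.exp (2*x) - 1) / (Real.exp (2*x) + 1) := by
  rw [Real.tanh_eq_sinh_div_cosh, Real.sinh_eq, Real.cosh_eq]
  have h1 : Real.exp x ≠ 0 := (Real.exp_pos x).ne'
  have h2 : Real.exp (2*x) = Real.exp x * Real.exp x := by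
    rw [← Real.exp_add]; ring_nf
  have h3 : Real.exp (-x) = (Real.exp x)⁻¹ := Real.exp_neg x
  have h4 : Real.exp (2*x) + 1 > 0 := by positivity
  field_simp [h2, h3]
  rw [show x * 2 = 2 * x by ring, h2, h3]
  field_simp

lemma exp2_pos (x : ℝ) : (0:ℝ) < Real.exp (2*x) + 1 := by positivity

lemma tanh_lt_one (x : ℝ) : Real.tanh x < 1 := by
  rw [tanh_eq]
  rw [div_lt_one (exp2_pos x)]; linarith

lemma neg_one_lt_tanh (x : ℝ) : -1 < Real.tanh x := by
  rw [tanh_eq]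
  rw [lt_div_iff₀ (exp2_pos x)]
  have := Real.exp_pos (2*x); linarith

lemma tanh_strictMono : StrictMono Real.tanh := by
  intro x y hxy
  rw [tanh_eq, tanh_eq]
  rw [div_lt_div_iff₀ (exp2_pos x) (exp2_pos y)]
  have h : Real.exp (2*x) < Real.exp (2*y) := Real.exp_lt_exp.2 (by linarith)
  nlinarith

lemma tanh_mono : Monotone Real.tanh := tanh_strictMono.monotone

lemma tanh_nonneg {x : ℝ} (h : 0 ≤ x) : 0 ≤ Real.tanh x := by
  have := tanh_mono h; rwa [Real.tanh_zero] at this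

lemma artanh_tanh (x : ℝ) : artanh (Real.tanh x) = x := by
  rw [tanh_eq, artanh]
  have h4 := exp2_pos x
  have h5 : (1 + (Real.exp (2*x) - 1) / (Real.exp (2*x) + 1)) / (1 - (Real.exp (2*x) - 1) / (Real.exp (2*x) + 1)) = Real.exp (2*x) := by
    field_simp
    ring
  rw [h5, Real.log_exp]; ring

lemma tanh_artanh {x : ℝ} (h1 : -1 < x) (h2 : x < 1) : Real.tanh (artanh x) = x := by
  rw [artanh, tanh_eq]
  have hx1 : (0:ℝ) < 1 - x := by linarith
  have hx2 : (0:ℝ) < 1 + x := by linarith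
  have h5 : 2 * (Real.log ((1 + x) / (1 - x)) / 2) = Real.log ((1+x)/(1-x)) := by ring
  rw [h5, Real.exp_log (by positivity)]
  field_simp
  ring

lemma artanh_zero : artanh 0 = 0 := by simp [artanh]

lemma artanh_le_artanh {x y : ℝ} (h0 : -1 < x) (hxy : x ≤ y) (h1 : y < 1) :
    artanh x ≤ artanh y := by
  unfold artanh
  have hx1 : (0:ℝ) < 1 - x := by linarith
  have hy1 : (0:ℝ) < 1 - y := by linarith
  have hx2 : (0:ℝ) < 1 + x := by linarith
  have hy2 : (0:ℝ) < 1 + y := by linarith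
  have h : (1 + x) / (1 - x) ≤ (1 + y) / (1 - y) := by
    rw [div_le_div_iff₀ hx1 hy1]; nlinarith
  have := Real.log_le_log (by positivity) h
  linarith

lemma artanh_lt_artanh {x y : ℝ} (h0 : -1 < x) (hxy : x < y) (h1 : y < 1) :
    artanh x < artanh y := by
  unfold artanh
  have hx1 : (0:ℝ) < 1 - x := by linarith
  have hy1 : (0:ℝ) < 1 - y := by linarith
  have hx2 : (0:ℝ) < 1 + x := by linarith
  have h : (1 + x) / (1 - x) < (1 + y) / (1 - y) := by
    rw [div_lt_div_iff₀ hx1 hy1]; nlinarith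
  have := Real.log_lt_log (by positivity) h
  linarith

lemma artanh_nonneg {x : ℝ} (h0 : 0 ≤ x) (h1 : x < 1) : 0 ≤ artanh x := by
  have := artanh_le_artanh (by norm_num) h0 h1
  rwa [artanh_zero] at this

lemma lt_of_artanh_lt {x y : ℝ} (hx0 : -1 < x) (hx1 : x < 1) (hy0 : -1 < y) (hy1 : y < 1)
    (h : artanh x < artanh y) : x < y := by
  by_contra hc
  push_neg at hc
  have := artanh_le_artanh hy0 hc hx1
  linarith

lemma artanh_add {a b : ℝ} (ha0 : 0 ≤ a) (ha : a < 1) (hb0 : 0 ≤ b) (hb : b < 1) :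
    artanh ((a + b) / (1 + a * b)) = artanh a + artanh b := by
  unfold artanh
  have h1 : (0:ℝ) < 1 - a := by linarith
  have h2 : (0:ℝ) < 1 - b := by linarith
  have h3 : (0:ℝ) < 1 + a := by linarith
  have h4 : (0:ℝ) < 1 + b := by linarith
  have h5 : (0:ℝ) < 1 + a * b := by nlinarith
  have key : (1 + (a + b) / (1 + a * b)) / (1 - (a + b) / (1 + a * b))
      = ((1 + a) / (1 - a)) * ((1 + b) / (1 - b)) := by
    have hnum : 1 + (a + b) / (1 + a * b) = ((1+a)*(1+b))/(1+a*b) := by field_simp; ring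
    have hden : 1 - (a + b) / (1 + a * b) = ((1-a)*(1-b))/(1+a*b) := by field_simp; ring
    rw [hnum, hden]
    field_simp
  rw [key, Real.log_mul (by positivity) (by positivity)]
  ring

lemma continuous_tanh : Continuous Real.tanh := by
  have : Real.tanh = fun x => Real.sinh x / Real.cosh x := by
    funext x; exact Real.tanh_eq_sinh_div_cosh x
  rw [this]
  exact Real.continuous_sinh.div Real.continuous_cosh fun x => (Real.cosh_pos x).ne'

lemma continuousAt_artanh {x : ℝ} (h1 : -1 < x) (h2 : x < 1) : ContinuousAt artanh x := by
  unfold artanh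
  have hpos : (0:ℝ) < (1 + x) / (1 - x) := div_pos (by linarith) (by linarith)
  have hc : ContinuousAt (fun y : ℝ => (1 + y) / (1 - y)) x :=
    ContinuousAt.div (continuousAt_const.add continuousAt_id)
      (continuousAt_const.sub continuousAt_id) (sub_ne_zero.2 (by linarith))
  have h2 : ContinuousAt (fun y : ℝ => Real.log ((1 + y) / (1 - y))) x :=
    ContinuousAt.comp (x := x) (g := Real.log) (f := fun y : ℝ => (1 + y) / (1 - y))
      (Real.continuousAt_log hpos.ne') hc
  exact h2.div_const 2



noncomputable def pd (z w : ℂ) : ℝ := ‖(z - w) / (1 - (starRingEnd ℂ) w * z)‖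

noncomputable def mob (a z : ℂ) : ℂ := (a - z) / (1 - (starRingEnd ℂ) a * z)

lemma mem_ball_iff_abs {z : ℂ} : z ∈ ball (0:ℂ) 1 ↔ ‖z‖ < 1 := by
  rw [mem_ball_zero_iff]

lemma den_ne {w z : ℂ} (hw : ‖w‖ < 1) (hz : ‖z‖ < 1) :
    (1 : ℂ) - (starRingEnd ℂ) w * z ≠ 0 := by
  intro h
  have h1 : (starRingEnd ℂ) w * z = 1 := by
    have := sub_eq_zero.mp h; exact this.symm
  have h2 : ‖(starRingEnd ℂ) w * z‖ = 1 := by rw [h1]; simp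
  rw [norm_mul, Complex.norm_conj] at h2
  nlinarith [norm_nonneg w, norm_nonneg z]

lemma normSq_lt_one {z : ℂ} (hz : ‖z‖ < 1) : Complex.normSq z < 1 := by
  rw [← Complex.sq_norm]
  nlinarith [norm_nonneg z]

lemma abs_sub_lt {a z : ℂ} (ha : ‖a‖ < 1) (hz : ‖z‖ < 1) :
    ‖a - z‖ < ‖1 - (starRingEnd ℂ) a * z‖ := by
  refine lt_of_pow_lt_pow_left₀ 2 (norm_nonneg _) ?_
  rw [Complex.sq_norm, Complex.sq_norm, Complex.normSq_sub, Complex.normSq_sub]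
  have e1 : Complex.normSq (1:ℂ) = 1 := Complex.normSq_one
  have e2 : Complex.normSq ((starRingEnd ℂ) a * z) = Complex.normSq a * Complex.normSq z := by
    rw [map_mul, Complex.normSq_conj]
  have e3 : ((1:ℂ) * (starRingEnd ℂ) ((starRingEnd ℂ) a * z)).re = (a * (starRingEnd ℂ) z).re := by
    simp [map_mul, Complex.conj_conj, mul_comm]
  rw [e1, e2, e3]
  have h1 := normSq_lt_one ha
  have h2 := normSq_lt_one hz
  nlinarith

lemma pd_lt_one {z w : ℂ} (hz : ‖z‖ < 1) (hw : ‖w‖ < 1) :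
    pd z w < 1 := by
  unfold pd
  rw [norm_div, div_lt_one (by
    have := den_ne hw hz
    have := norm_pos_iff.mpr this
    exact this)]
  calc ‖z - w‖ < ‖1 - (starRingEnd ℂ) z * w‖ := abs_sub_lt hz hw
    _ = ‖1 - (starRingEnd ℂ) w * z‖ := by
        rw [← Complex.norm_conj]
        congr 1
        simp [map_mul, Complex.conj_conj, mul_comm]

lemma pd_nonneg (z w : ℂ) : 0 ≤ pd z w := norm_nonneg _

lemma pd_symm (z w : ℂ) : pd z w = pd w z := by
  unfold pd
  rw [norm_div, norm_div, norm_sub_rev]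
  congr 1
  rw [← Complex.norm_conj (1 - (starRingEnd ℂ) w * z)]
  congr 1
  rw [map_sub, map_one, map_mul, Complex.conj_conj, mul_comm]

lemma pd_self (z : ℂ) : pd z z = 0 := by simp [pd]

lemma pd_zero_left (w : ℂ) : pd 0 w = ‖w‖ := by simp [pd]

lemma pd_pos {z w : ℂ} (hz : ‖z‖ < 1) (hw : ‖w‖ < 1) (hne : z ≠ w) :
    0 < pd z w := by
  unfold pd
  apply norm_pos_iff.mpr
  apply div_ne_zero (sub_ne_zero.2 hne) (den_ne hw hz)

lemma mob_mem {a z : ℂ} (ha : ‖a‖ < 1) (hz : ‖z‖ < 1) :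
    ‖mob a z‖ < 1 := by
  unfold mob
  rw [norm_div, div_lt_one (norm_pos_iff.mpr (den_ne ha hz))]
  exact abs_sub_lt ha hz

lemma mob_zero (a : ℂ) : mob a 0 = a := by simp [mob]

lemma mob_self (a : ℂ) : mob a a = 0 := by simp [mob]

lemma mob_mob {a z : ℂ} (ha : ‖a‖ < 1) (hz : ‖z‖ < 1) :
    mob a (mob a z) = z := by
  have h1 := den_ne ha hz
  have h2 := den_ne ha ha
  have e1 : a - mob a z = z * (1 - (starRingEnd ℂ) a * a) / (1 - (starRingEnd ℂ) a * z) := by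
    unfold mob; rw [sub_div' h1]; congr 1; ring
  have e2 : (1:ℂ) - (starRingEnd ℂ) a * mob a z
      = (1 - (starRingEnd ℂ) a * a) / (1 - (starRingEnd ℂ) a * z) := by
    unfold mob; rw [mul_div_assoc', sub_div' h1]; congr 1; ring
  rw [show mob a (mob a z) = (a - mob a z) / (1 - (starRingEnd ℂ) a * mob a z) from rfl]
  rw [e1, e2]
  rw [div_div_div_eq]
  rw [div_eq_iff (by exact mul_ne_zero h1 h2)]
  ring

lemma pd_eq_abs_mob (z w : ℂ) : pd z w = ‖mob w z‖ := by
  unfold pd mob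
  rw [norm_div, norm_div]
  congr 1
  exact norm_sub_rev z w

lemma mob_diffOn {a : ℂ} (ha : ‖a‖ < 1) :
    DifferentiableOn ℂ (mob a) (ball 0 1) := by
  unfold mob
  apply DifferentiableOn.div
  · exact (differentiableOn_const a).sub differentiableOn_id
  · exact (differentiableOn_const 1).sub ((differentiableOn_const _).mul differentiableOn_id)
  · intro z hz
    exact den_ne ha (mem_ball_iff_abs.mp hz)

lemma pd_mob_zero {a w : ℂ} (ha : ‖a‖ < 1) (hw : ‖w‖ < 1) :
    pd a (mob a w) = ‖w‖ := by
  have hv : ‖mob a w‖ < 1 := mob_mem ha hw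
  have h1 : (1:ℂ) - (starRingEnd ℂ) a * w ≠ 0 := den_ne ha hw
  have h2 : (1:ℂ) - (starRingEnd ℂ) (mob a w) * a ≠ 0 := den_ne hv ha
  have h3 : (1:ℂ) - (starRingEnd ℂ) a * a ≠ 0 := den_ne ha ha
  have h1' : (1:ℂ) - a * (starRingEnd ℂ) w ≠ 0 := by
    intro h
    apply h1
    have := congrArg (starRingEnd ℂ) h
    simpa [map_sub, map_mul, Complex.conj_conj, mul_comm] using this
  have eA : a - mob a w = w * (1 - (starRingEnd ℂ) a * a) / (1 - (starRingEnd ℂ) a * w) := by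
    unfold mob; rw [sub_div' h1]; congr 1; ring
  have eB : (starRingEnd ℂ) (mob a w)
      = ((starRingEnd ℂ) a - (starRingEnd ℂ) w) / (1 - a * (starRingEnd ℂ) w) := by
    unfold mob
    rw [map_div₀, map_sub, map_sub, map_one, map_mul, Complex.conj_conj]
  have eC : (1:ℂ) - (starRingEnd ℂ) (mob a w) * a
      = (1 - (starRingEnd ℂ) a * a) / (1 - a * (starRingEnd ℂ) w) := by
    rw [eB, div_mul_eq_mul_div, sub_div' h1']; congr 1; ring
  have key : (a - mob a w) / (1 - (starRingEnd ℂ) (mob a w) * a)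
      = w * (1 - a * (starRingEnd ℂ) w) / (1 - (starRingEnd ℂ) a * w) := by
    rw [eA, eC]
    rw [div_div_div_eq]
    rw [div_eq_div_iff (by exact mul_ne_zero h1 h3) (by exact h1)]
    ring
  unfold pd
  rw [key, norm_div, norm_mul]
  have h4 : ‖1 - a * (starRingEnd ℂ) w‖ = ‖1 - (starRingEnd ℂ) a * w‖ := by
    rw [← Complex.norm_conj]
    congr 1
    simp [map_sub, map_mul, Complex.conj_conj, mul_comm]
  rw [h4, mul_div_assoc, div_self (norm_ne_zero_iff.mpr h1), mul_one]




lemma pd_le_CI {z w : ℂ} (hz : ‖z‖ < 1) (hw : ‖w‖ < 1) :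
    pd z w ≤ (‖z‖ + ‖w‖) / (1 + ‖z‖ * ‖w‖) := by
  unfold pd
  rw [norm_div]
  have hden : (0:ℝ) < ‖1 - (starRingEnd ℂ) w * z‖ :=
    norm_pos_iff.mpr (den_ne hw hz)
  have hden2 : (0:ℝ) < 1 + ‖z‖ * ‖w‖ := by
    nlinarith [norm_nonneg z, norm_nonneg w]
  rw [div_le_div_iff₀ hden hden2]
  -- suffices : |z-w| * (1 + |z||w|) ≤ (|z|+|w|) * |1 - w̄z|
  have key : (‖z - w‖ * (1 + ‖z‖ * ‖w‖))^2
      ≤ ((‖z‖ + ‖w‖) * ‖1 - (starRingEnd ℂ) w * z‖)^2 := by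
    have e1 : ‖z - w‖^2 = Complex.normSq z + Complex.normSq w - 2 * (z * (starRingEnd ℂ) w).re := by
      rw [Complex.sq_norm, Complex.normSq_sub]
    have e2 : ‖1 - (starRingEnd ℂ) w * z‖^2
        = 1 - 2 * (z * (starRingEnd ℂ) w).re + Complex.normSq z * Complex.normSq w := by
      rw [Complex.sq_norm, Complex.normSq_sub]
      have : ((1:ℂ) * (starRingEnd ℂ) ((starRingEnd ℂ) w * z)).re = (z * (starRingEnd ℂ) w).re := by
        simp [map_mul, Complex.conj_conj, mul_comm]
      rw [this, Complex.normSq_one, map_mul, Complex.normSq_conj]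
      ring
    have habs : |(z * (starRingEnd ℂ) w).re| ≤ ‖z‖ * ‖w‖ := by
      calc |(z * (starRingEnd ℂ) w).re| ≤ ‖z * (starRingEnd ℂ) w‖ := Complex.abs_re_le_norm _
        _ = ‖z‖ * ‖w‖ := by rw [norm_mul, Complex.norm_conj]
      -- done
    have ha2 : ‖z‖^2 = Complex.normSq z := Complex.sq_norm z
    have hb2 : ‖w‖^2 = Complex.normSq w := Complex.sq_norm w
    have h1 := normSq_lt_one hz
    have h2 := normSq_lt_one hw
    have hre1 : -(‖z‖ * ‖w‖) ≤ (z * (starRingEnd ℂ) w).re := neg_le_of_abs_le habs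
    have hfac : 0 ≤ 2 * (1 - ‖z‖^2) * (1 - ‖w‖^2)
        * (‖z‖ * ‖w‖ + (z * (starRingEnd ℂ) w).re) := by
      have hz2 : ‖z‖^2 < 1 := by rw [ha2]; exact h1
      have hw2 : ‖w‖^2 < 1 := by rw [hb2]; exact h2
      have h0 : 0 ≤ ‖z‖ * ‖w‖ + (z * (starRingEnd ℂ) w).re := by linarith
      exact mul_nonneg (mul_nonneg (mul_nonneg (by norm_num) (by linarith)) (by linarith)) h0
    have expand : ((‖z‖ + ‖w‖) * ‖1 - (starRingEnd ℂ) w * z‖)^2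
        - (‖z - w‖ * (1 + ‖z‖ * ‖w‖))^2
        = 2 * (1 - ‖z‖^2) * (1 - ‖w‖^2)
          * (‖z‖ * ‖w‖ + (z * (starRingEnd ℂ) w).re) := by
      rw [mul_pow, mul_pow, e1, e2, ← ha2, ← hb2]
      ring
    linarith
  have hnn1 : 0 ≤ ‖z - w‖ * (1 + ‖z‖ * ‖w‖) := by positivity
  have hnn2 : 0 ≤ (‖z‖ + ‖w‖) * ‖1 - (starRingEnd ℂ) w * z‖ := by positivity
  nlinarith [key]

lemma tri0 {z w : ℂ} (hz : ‖z‖ < 1) (hw : ‖w‖ < 1) :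
    artanh (‖w‖) ≤ artanh (‖z‖) + artanh (pd z w) := by
  have hm : ‖mob z w‖ < 1 := mob_mem hz hw
  have habs : ‖w‖ = pd z (mob z w) := (pd_mob_zero hz hw).symm
  have hCI := pd_le_CI hz hm
  have hb : pd z (mob z w) ≤ (‖z‖ + ‖mob z w‖) / (1 + ‖z‖ * ‖mob z w‖) := by
    calc pd z (mob z w) = pd (mob z w) z := pd_symm _ _
      _ ≤ _ := by rw [pd_symm] at hCI ⊢; exact (pd_le_CI hz hm)
  have hsum := artanh_add (norm_nonneg z) hz (norm_nonneg (mob z w)) hm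
  have hlt : (‖z‖ + ‖mob z w‖) / (1 + ‖z‖ * ‖mob z w‖) < 1 := by
    rw [div_lt_one (by nlinarith [norm_nonneg z, norm_nonneg (mob z w)])]
    nlinarith [norm_nonneg z, norm_nonneg (mob z w)]
  calc artanh (‖w‖) = artanh (pd z (mob z w)) := by rw [habs]
    _ ≤ artanh ((‖z‖ + ‖mob z w‖) / (1 + ‖z‖ * ‖mob z w‖)) := by
        apply artanh_le_artanh (by linarith [pd_nonneg z (mob z w)]) hb hlt
    _ = artanh (‖z‖) + artanh (‖mob z w‖) := hsum
    _ = artanh (‖z‖) + artanh (pd z w) := by rw [← pd_eq_abs_mob w z, pd_symm w z]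

lemma schwarz_pick {g : ℂ → ℂ} (hg : DifferentiableOn ℂ g (ball 0 1))
    (hgm : MapsTo g (ball 0 1) (ball (0:ℂ) 1)) {z w : ℂ}
    (hz : z ∈ ball (0:ℂ) 1) (hw : w ∈ ball (0:ℂ) 1) :
    pd (g z) (g w) ≤ pd z w := by
  have hza := mem_ball_iff_abs.mp hz
  have hwa := mem_ball_iff_abs.mp hw
  have hgw : ‖g w‖ < 1 := mem_ball_iff_abs.mp (hgm hw)
  set k : ℂ → ℂ := fun ζ => mob (g w) (g (mob w ζ)) with hk
  have hmobm : MapsTo (mob w) (ball (0:ℂ) 1) (ball (0:ℂ) 1) := by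
    intro ζ hζ
    exact mem_ball_iff_abs.mpr (mob_mem hwa (mem_ball_iff_abs.mp hζ))
  have hinner : DifferentiableOn ℂ (fun ζ => g (mob w ζ)) (ball 0 1) :=
    hg.comp (mob_diffOn hwa) hmobm
  have hkd : DifferentiableOn ℂ k (ball 0 1) := by
    apply DifferentiableOn.div
    · exact (differentiableOn_const _).sub hinner
    · exact (differentiableOn_const _).sub ((differentiableOn_const _).mul hinner)
    · intro ζ hζ
      exact den_ne hgw (mem_ball_iff_abs.mp (hgm (hmobm hζ)))
  have hkm : MapsTo k (ball (0:ℂ) 1) (ball (0:ℂ) 1) := by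
    intro ζ hζ
    exact mem_ball_iff_abs.mpr (mob_mem hgw (mem_ball_iff_abs.mp (hgm (hmobm hζ))))
  have hk0 : k 0 = 0 := by
    rw [hk]; simp only [mob_zero]; exact mob_self (g w)
  have hmwz : ‖mob w z‖ < 1 := mob_mem hwa hza
  have := Complex.norm_le_norm_of_mapsTo_ball hkd (hkm.mono_right ball_subset_closedBall) hk0 hmwz
  have hkval : k (mob w z) = mob (g w) (g z) := by
    rw [hk]; simp only [mob_mob hwa hza]
  rw [hkval] at this
  calc pd (g z) (g w) = ‖mob (g w) (g z)‖ := pd_eq_abs_mob _ _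
    _ ≤ ‖mob w z‖ := this
    _ = pd z w := (pd_eq_abs_mob z w).symm




lemma step {g : ℂ → ℂ} (hg : DifferentiableOn ℂ g (ball 0 1))
    (hgm : MapsTo g (ball 0 1) (ball (0:ℂ) 1))
    {b x y : ℂ} (hb : b ∈ ball (0:ℂ) 1) (hx : x ∈ ball (0:ℂ) 1) (hy : y ∈ ball (0:ℂ) 1)
    (hxb : x ≠ b) (hyb : y ≠ b) {m : ℝ} (hm0 : 0 ≤ m) (hm1 : m < 1)
    (hlow : m * pd x b ≤ pd (g x) (g b)) :
    Real.tanh (artanh m - artanh (pd x y)) * pd y b ≤ pd (g y) (g b) := by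
  have hba := mem_ball_iff_abs.mp hb
  have hxa := mem_ball_iff_abs.mp hx
  have hya := mem_ball_iff_abs.mp hy
  have hgb : ‖g b‖ < 1 := mem_ball_iff_abs.mp (hgm hb)
  set h : ℂ → ℂ := fun z =>
    dslope g b z * ((1 - (starRingEnd ℂ) b * z) / (1 - (starRingEnd ℂ) (g b) * g z)) with hhdef
  have hh_d : DifferentiableOn ℂ h (ball 0 1) := by
    apply DifferentiableOn.mul
    · exact (Complex.differentiableOn_dslope (isOpen_ball.mem_nhds hb)).mpr hg
    · apply DifferentiableOn.div
      · exact (differentiableOn_const _).sub ((differentiableOn_const _).mul differentiableOn_id)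
      · exact (differentiableOn_const _).sub ((differentiableOn_const _).mul hg)
      · intro z hz
        exact den_ne hgb (mem_ball_iff_abs.mp (hgm hz))
  have habs : ∀ z ∈ ball (0:ℂ) 1, z ≠ b →
      ‖h z‖ * pd z b = pd (g z) (g b) := by
    intro z hz hzb
    have hza := mem_ball_iff_abs.mp hz
    have hgz : ‖g z‖ < 1 := mem_ball_iff_abs.mp (hgm hz)
    have hne1 : z - b ≠ 0 := sub_ne_zero.2 hzb
    have hne2 : (1:ℂ) - (starRingEnd ℂ) b * z ≠ 0 := den_ne hba hza
    have hne3 : (1:ℂ) - (starRingEnd ℂ) (g b) * g z ≠ 0 := den_ne hgb hgz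
    have hds : dslope g b z = (g z - g b) / (z - b) := by
      rw [dslope_of_ne g hzb, slope_def_field]
    have hprod : h z * ((z - b) / (1 - (starRingEnd ℂ) b * z))
        = (g z - g b) / (1 - (starRingEnd ℂ) (g b) * g z) := by
      rw [hhdef]
      simp only
      rw [hds]
      rw [div_mul_div_comm, div_mul_div_comm, div_eq_div_iff (mul_ne_zero (mul_ne_zero hne1 hne3) hne2) hne3]
      ring
    have : ‖h z‖ * pd z b
        = ‖h z * ((z - b) / (1 - (starRingEnd ℂ) b * z))‖ := by
      rw [norm_mul (h z) ((z - b) / (1 - (starRingEnd ℂ) b * z))]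
      rfl
    rw [this, hprod]; rfl
  have hle1 : ∀ z ∈ ball (0:ℂ) 1, ‖h z‖ ≤ 1 := by
    intro z hz
    rcases eq_or_ne z b with rfl | hzb
    · -- continuity argument at b
      have hEq : 𝓝[(ball (0:ℂ) 1) ∩ {z}ᶜ] z = 𝓝[≠] z := by
        apply nhdsWithin_inter_of_mem
        exact mem_nhdsWithin_of_mem_nhds (isOpen_ball.mem_nhds hz)
      have hne : (𝓝[(ball (0:ℂ) 1) ∩ {z}ᶜ] z).NeBot := by
        rw [hEq]; infer_instance
      have hcont : ContinuousWithinAt (fun w => ‖h w‖) ((ball (0:ℂ) 1) ∩ {z}ᶜ) z := by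
        apply ContinuousWithinAt.mono _ (inter_subset_left)
        exact continuous_norm.continuousAt.comp_continuousWithinAt
          ((hh_d z hz).continuousWithinAt)
      refine le_of_tendsto hcont ?_
      filter_upwards [self_mem_nhdsWithin] with w hw
      have hwb : w ≠ z := hw.2
      have hwmem := hw.1
      have hwa := mem_ball_iff_abs.mp hwmem
      have hpdpos : 0 < pd w z := pd_pos hwa (mem_ball_iff_abs.mp hz) hwb
      have h1 := habs w hwmem hwb
      have h2 : pd (g w) (g z) ≤ pd w z := schwarz_pick hg hgm hwmem hz
      rw [← h1] at h2
      exact le_of_mul_le_mul_right (by rwa [one_mul]) hpdpos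
    · have hpdpos : 0 < pd z b := pd_pos (mem_ball_iff_abs.mp hz) hba hzb
      have h1 := habs z hz hzb
      have h2 : pd (g z) (g b) ≤ pd z b := schwarz_pick hg hgm hz hb
      rw [← h1] at h2
      exact le_of_mul_le_mul_right (by rwa [one_mul]) hpdpos
  have hhx : m ≤ ‖h x‖ := by
    have h1 := habs x hx hxb
    have hpdpos : 0 < pd x b := pd_pos hxa hba hxb
    rw [← h1] at hlow
    exact le_of_mul_le_mul_right hlow hpdpos
  set R := artanh (pd x y) with hR
  have hR0 : 0 ≤ R := artanh_nonneg (pd_nonneg x y) (pd_lt_one hxa hya)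
  have hmain : ∀ η ∈ Ioo (0:ℝ) 1, Real.tanh (artanh ((1-η)*m) - R) ≤ ‖h y‖ := by
    intro η hη
    obtain ⟨hη0, hη1⟩ := hη
    set c : ℂ := ((1-η : ℝ) : ℂ) with hc
    have hcabs : ‖c‖ = 1 - η := by
      rw [hc, Complex.norm_real, Real.norm_eq_abs, abs_of_pos (by linarith)]
    set k : ℂ → ℂ := fun z => c * h z with hk
    have hkd : DifferentiableOn ℂ k (ball 0 1) := hh_d.const_mul c
    have hkm : MapsTo k (ball (0:ℂ) 1) (ball (0:ℂ) 1) := by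
      intro z hz
      rw [mem_ball_iff_abs, hk]
      simp only [norm_mul, hcabs]
      calc (1-η) * ‖h z‖ ≤ (1-η) * 1 :=
            mul_le_mul_of_nonneg_left (hle1 z hz) (by linarith)
        _ < 1 := by linarith
    have hky : ‖k y‖ < 1 := mem_ball_iff_abs.mp (hkm hy)
    have hkx : ‖k x‖ < 1 := mem_ball_iff_abs.mp (hkm hx)
    have hsp : pd (k y) (k x) ≤ pd y x := schwarz_pick hkd hkm hy hx
    have htri : artanh (‖k x‖) ≤ artanh (‖k y‖) + artanh (pd (k y) (k x)) :=
      tri0 hky hkx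
    have h5 : artanh (pd (k y) (k x)) ≤ artanh (pd y x) :=
      artanh_le_artanh (by linarith [pd_nonneg (k y) (k x)]) hsp (pd_lt_one hya hxa)
    have h6 : artanh ((1-η)*m) ≤ artanh (‖k x‖) := by
      apply artanh_le_artanh (by nlinarith) _ hkx
      rw [hk]
      simp only [norm_mul, hcabs]
      exact mul_le_mul_of_nonneg_left hhx (by linarith)
    have h7 : artanh (pd y x) = R := by rw [hR, pd_symm y x]
    have h8 : artanh ((1-η)*m) - R ≤ artanh (‖k y‖) := by
      rw [← h7]; linarith
    have h9 := tanh_mono h8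
    rw [tanh_artanh (by linarith [norm_nonneg (k y)]) hky] at h9
    have h10 : ‖k y‖ ≤ ‖h y‖ := by
      rw [hk]
      simp only [norm_mul, hcabs]
      calc (1-η) * ‖h y‖ ≤ 1 * ‖h y‖ :=
            mul_le_mul_of_nonneg_right (by linarith) (norm_nonneg _)
        _ = ‖h y‖ := one_mul _
    linarith
  have hcont0 : ContinuousAt (fun η : ℝ => Real.tanh (artanh ((1-η)*m) - R)) 0 := by
    have hinner : ContinuousAt (fun η : ℝ => (1-η)*m) 0 :=
      ((continuousAt_const.sub continuousAt_id).mul continuousAt_const)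
    have h1 : ContinuousAt (fun η : ℝ => artanh ((1-η)*m)) 0 := by
      have hm' : (1-(0:ℝ))*m = m := by ring
      refine ContinuousAt.comp (g := artanh) (f := fun η : ℝ => (1-η)*m) (x := (0:ℝ)) ?_ hinner
      show ContinuousAt artanh ((1-(0:ℝ))*m)
      rw [hm']
      exact continuousAt_artanh (by linarith) hm1
    exact continuous_tanh.continuousAt.comp (h1.sub continuousAt_const)
  have hlim : Filter.Tendsto (fun η : ℝ => Real.tanh (artanh ((1-η)*m) - R))
      (nhdsWithin 0 (Ioi 0)) (nhds (Real.tanh (artanh ((1-(0:ℝ))*m) - R))) :=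
    hcont0.tendsto.mono_left nhdsWithin_le_nhds
  have hfin : Real.tanh (artanh ((1-(0:ℝ))*m) - R) ≤ ‖h y‖ := by
    refine le_of_tendsto hlim ?_
    filter_upwards [Ioo_mem_nhdsGT_of_mem (by constructor <;> norm_num : (0:ℝ) ∈ Ico (0:ℝ) 1)]
      with η hη using hmain η hη
  have hfin' : Real.tanh (artanh m - R) ≤ ‖h y‖ := by
    have : (1-(0:ℝ))*m = m := by ring
    rwa [this] at hfin
  calc Real.tanh (artanh m - artanh (pd x y)) * pd y b
      ≤ ‖h y‖ * pd y b := by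
        apply mul_le_mul_of_nonneg_right _ (pd_nonneg y b)
        rw [← hR]; exact hfin'
    _ = pd (g y) (g b) := habs y hy hyb




lemma poincare_eq (z w : ℂ) : poincare z w = artanh (pd z w) := rfl

lemma poincare_symm (z w : ℂ) : poincare z w = poincare w z := by
  rw [poincare_eq, poincare_eq, pd_symm]

variable {X : Type*} [NormedAddCommGroup X] [NormedSpace ℂ X]

lemma carath_symm (D : Set X) (a b : X) : carath D a b = carath D b a := by
  unfold carath
  congr 1
  ext r
  constructor
  · rintro ⟨f, h1, h2, rfl⟩
    exact ⟨f, h1, h2, poincare_symm _ _⟩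
  · rintro ⟨f, h1, h2, rfl⟩
    exact ⟨f, h1, h2, poincare_symm _ _⟩

lemma zero_mem_carathSet (D : Set X) (a b : X) :
    (0:ℝ) ∈ {r : ℝ | ∃ f : X → ℂ, DifferentiableOn ℂ f D ∧ MapsTo f D (ball (0:ℂ) 1) ∧
      r = poincare (f a) (f b)} := by
  refine ⟨fun _ => 0, differentiableOn_const _, fun x _ => mem_ball_self one_pos, ?_⟩
  rw [poincare_eq, pd_self, artanh_zero]

lemma r_le_poincare {D : Set X} {γ : ℂ → X} (hγd : DifferentiableOn ℂ γ (ball 0 1))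
    (hγm : MapsTo γ (ball 0 1) D)
    {u v : ℂ} (hu : u ∈ ball (0:ℂ) 1) (hv : v ∈ ball (0:ℂ) 1)
    {f : X → ℂ} (hfd : DifferentiableOn ℂ f D) (hfm : MapsTo f D (ball (0:ℂ) 1)) :
    poincare (f (γ u)) (f (γ v)) ≤ poincare u v := by
  have hg : DifferentiableOn ℂ (f ∘ γ) (ball 0 1) := hfd.comp hγd hγm
  have hgm : MapsTo (f ∘ γ) (ball 0 1) (ball (0:ℂ) 1) := hfm.comp hγm
  have hsp : pd (f (γ u)) (f (γ v)) ≤ pd u v := schwarz_pick hg hgm hu hv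
  rw [poincare_eq, poincare_eq]
  exact artanh_le_artanh (by linarith [pd_nonneg (f (γ u)) (f (γ v))]) hsp
    (pd_lt_one (mem_ball_iff_abs.mp hu) (mem_ball_iff_abs.mp hv))

lemma bdd_carathSet {D : Set X} {γ : ℂ → X} (hγd : DifferentiableOn ℂ γ (ball 0 1))
    (hγm : MapsTo γ (ball 0 1) D)
    {u v : ℂ} (hu : u ∈ ball (0:ℂ) 1) (hv : v ∈ ball (0:ℂ) 1) :
    BddAbove {r : ℝ | ∃ f : X → ℂ, DifferentiableOn ℂ f D ∧ MapsTo f D (ball (0:ℂ) 1) ∧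
      r = poincare (f (γ u)) (f (γ v))} := by
  refine ⟨poincare u v, ?_⟩
  rintro r ⟨f, h1, h2, rfl⟩
  exact r_le_poincare hγd hγm hu hv h1 h2

lemma poincare_le_carath {D : Set X} {χ : ℂ → X} (hχd : DifferentiableOn ℂ χ (ball 0 1))
    (hχm : MapsTo χ (ball 0 1) D) {p q : X} {s : ℝ} (hs0 : 0 < s) (hs1 : s < 1)
    (hχ0 : χ 0 = p) (hχs : χ (s:ℂ) = q)
    (hC : carath D p q = artanh s)
    {u v : ℂ} (hu : u ∈ ball (0:ℂ) 1) (hv : v ∈ ball (0:ℂ) 1)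
    (hus : u ≠ (s:ℂ)) (huv : u ≠ v) :
    poincare u v ≤ carath D (χ u) (χ v) := by
  have hua := mem_ball_iff_abs.mp hu
  have hva := mem_ball_iff_abs.mp hv
  have hsmem : (s:ℂ) ∈ ball (0:ℂ) 1 := by
    rw [mem_ball_iff_abs, Complex.norm_real, Real.norm_eq_abs, abs_of_pos hs0]; exact hs1
  have hsa := mem_ball_iff_abs.mp hsmem
  have h0mem : (0:ℂ) ∈ ball (0:ℂ) 1 := by rw [mem_ball_iff_abs]; simp
  have hp : p ∈ D := hχ0 ▸ hχm h0mem
  have hq : q ∈ D := hχs ▸ hχm hsmem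
  have hbdd := bdd_carathSet hχd hχm hu hv
  have hne : Set.Nonempty {r : ℝ | ∃ f : X → ℂ, DifferentiableOn ℂ f D ∧
      MapsTo f D (ball (0:ℂ) 1) ∧ r = poincare (f p) (f q)} :=
    ⟨0, zero_mem_carathSet D p q⟩
  have hcar0 : 0 ≤ carath D (χ u) (χ v) := le_csSup hbdd (zero_mem_carathSet D (χ u) (χ v))
  have key : ∀ δ : ℝ, 0 < δ → poincare u v ≤ carath D (χ u) (χ v) + δ := by
    intro δ hδ
    by_cases hδbig : poincare u v ≤ δ
    · linarith
    push_neg at hδbig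
    have hpduv : pd u v < 1 := pd_lt_one hua hva
    have hpduv0 : 0 < pd u v := pd_pos hua hva huv
    have hρeq : Real.tanh (poincare u v) = pd u v := by
      rw [poincare_eq]
      exact tanh_artanh (by linarith) hpduv
    set ρ := poincare u v with hρ
    have hρ0 : 0 < ρ := lt_trans hδ hδbig
    set t := Real.tanh (ρ - δ) / pd u v with ht
    have htanhlt : Real.tanh (ρ - δ) < pd u v := by
      rw [← hρeq]; exact tanh_strictMono (by linarith)
    have ht1 : t < 1 := (div_lt_one hpduv0).mpr htanhlt
    have ht00 : 0 ≤ t := div_nonneg (tanh_nonneg (by linarith)) (le_of_lt hpduv0)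
    set K := artanh t with hK
    have hK0 : 0 ≤ K := artanh_nonneg ht00 ht1
    set R2 := artanh (pd (s:ℂ) v) with hR2
    have hR20 : 0 ≤ R2 := artanh_nonneg (pd_nonneg _ _) (pd_lt_one hsa hva)
    set t1 := Real.tanh (R2 + K) with ht1def
    have ht1l : t1 < 1 := tanh_lt_one _
    have ht10 : 0 ≤ t1 := tanh_nonneg (by linarith)
    set R1 := artanh (pd 0 u) with hR1
    have hR10 : 0 ≤ R1 := artanh_nonneg (pd_nonneg _ _) (pd_lt_one (by simpa using one_pos) hua)
    set t0 := Real.tanh (R1 + artanh t1) with ht0def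
    have ht0l : t0 < 1 := tanh_lt_one _
    have ht00' : 0 ≤ t0 := tanh_nonneg (by linarith [artanh_nonneg ht10 ht1l])
    have hlt : artanh (t0 * s) < artanh s :=
      artanh_lt_artanh (by nlinarith) (by nlinarith) hs1
    rw [← hC] at hlt
    obtain ⟨r, hrmem, hrgt⟩ := exists_lt_of_lt_csSup hne hlt
    obtain ⟨f, hfd, hfm, rfl⟩ := hrmem
    have hfp : f p ∈ ball (0:ℂ) 1 := hfm hp
    have hfq : f q ∈ ball (0:ℂ) 1 := hfm hq
    have hpdlt : pd (f p) (f q) < 1 :=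
      pd_lt_one (mem_ball_iff_abs.mp hfp) (mem_ball_iff_abs.mp hfq)
    rw [poincare_eq] at hrgt
    have hgt : t0 * s < pd (f p) (f q) :=
      lt_of_artanh_lt (by nlinarith) (by nlinarith)
        (by linarith [pd_nonneg (f p) (f q)]) hpdlt hrgt
    set g : ℂ → ℂ := f ∘ χ with hgdef
    have hgd : DifferentiableOn ℂ g (ball 0 1) := hfd.comp hχd hχm
    have hgm : MapsTo g (ball 0 1) (ball (0:ℂ) 1) := hfm.comp hχm
    have hg0 : g 0 = f p := by rw [hgdef]; simp [hχ0]
    have hgs : g (s:ℂ) = f q := by rw [hgdef]; simp [hχs]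
    have hpd0s : pd 0 (s:ℂ) = s := by
      rw [pd_zero_left, Complex.norm_real, Real.norm_eq_abs, abs_of_pos hs0]
    have h0s : (0:ℂ) ≠ (s:ℂ) := by exact_mod_cast ne_of_lt hs0
    have hlow1 : t0 * pd 0 (s:ℂ) ≤ pd (g 0) (g (s:ℂ)) := by
      rw [hg0, hgs, hpd0s]; linarith
    have hstep1 := step hgd hgm hsmem h0mem hu h0s hus ht00' ht0l hlow1
    have e1 : artanh t0 - artanh (pd 0 u) = artanh t1 := by
      rw [ht0def, artanh_tanh, hR1]; ring
    have hstep1' : t1 * pd (s:ℂ) u ≤ pd (g (s:ℂ)) (g u) := by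
      rw [pd_symm (s:ℂ) u, pd_symm (g (s:ℂ)) (g u)]
      calc t1 * pd u (s:ℂ) = Real.tanh (artanh t1) * pd u (s:ℂ) := by
            rw [tanh_artanh (by linarith) ht1l]
        _ = Real.tanh (artanh t0 - artanh (pd 0 u)) * pd u (s:ℂ) := by rw [e1]
        _ ≤ _ := hstep1
    have hstep2 := step hgd hgm hu hsmem hv (Ne.symm hus) (Ne.symm huv) ht10 ht1l hstep1'
    have e2 : artanh t1 - artanh (pd (s:ℂ) v) = K := by
      rw [ht1def, artanh_tanh, hR2]; ring
    have hfinal : Real.tanh (ρ - δ) ≤ pd (g u) (g v) := by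
      rw [e2] at hstep2
      rw [hK, tanh_artanh (by linarith) ht1] at hstep2
      rw [ht, pd_symm v u, div_mul_cancel₀ _ (ne_of_gt hpduv0)] at hstep2
      rw [pd_symm (g u) (g v)]
      exact hstep2
    have hmemr : poincare (f (χ u)) (f (χ v)) ∈ {r : ℝ | ∃ f : X → ℂ,
        DifferentiableOn ℂ f D ∧ MapsTo f D (ball (0:ℂ) 1) ∧
        r = poincare (f (χ u)) (f (χ v))} := ⟨f, hfd, hfm, rfl⟩
    have hler : poincare (f (χ u)) (f (χ v)) ≤ carath D (χ u) (χ v) := le_csSup hbdd hmemr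
    have hlast : ρ - δ ≤ poincare (f (χ u)) (f (χ v)) := by
      rw [poincare_eq]
      have hgu : g u = f (χ u) := rfl
      have hgv : g v = f (χ v) := rfl
      have hpdlt2 : pd (f (χ u)) (f (χ v)) < 1 :=
        pd_lt_one (mem_ball_iff_abs.mp (hfm (hχm hu))) (mem_ball_iff_abs.mp (hfm (hχm hv)))
      calc ρ - δ = artanh (Real.tanh (ρ - δ)) := (artanh_tanh _).symm
        _ ≤ artanh (pd (f (χ u)) (f (χ v))) := by
            apply artanh_le_artanh (neg_one_lt_tanh _) _ hpdlt2
            rw [← hgu, ← hgv]; exact hfinal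
    linarith
  exact le_of_forall_pos_le_add key


end Helpers

open Helpers in
theorem stmt6 {X : Type*} [NormedAddCommGroup X] [NormedSpace ℂ X]
    (D : Set X) (hD : IsOpen D) (hDc : Convex ℝ D)
    (p q : X) (hpq : p ≠ q) (hp : p ∈ D) (hq : q ∈ D)
    (s : ℝ) (hsdef : s = Real.tanh (carath D p q)) (hs0 : 0 < s)
    (φ ψ : ℂ → X) (hφ : IsComplexGeodesic D φ) (hψ : IsComplexGeodesic D ψ)
    (hφ0 : φ 0 = p) (hψ0 : ψ 0 = p) (hφs : φ (s : ℂ) = q) (hψs : ψ (s : ℂ) = q)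
    (lam : ℝ) (hlam0 : 0 ≤ lam) (hlam1 : lam ≤ 1) :
    IsComplexGeodesic D (fun ζ => lam • φ ζ + (1 - lam) • ψ ζ) ∧
      (fun ζ => lam • φ ζ + (1 - lam) • ψ ζ) 0 = p ∧
      (fun ζ => lam • φ ζ + (1 - lam) • ψ ζ) (s : ℂ) = q := by
  obtain ⟨hφd, hφm, hφg⟩ := hφ
  obtain ⟨hψd, hψm, hψg⟩ := hψ
  have hs1 : s < 1 := by rw [hsdef]; exact tanh_lt_one _
  have hsmem : (s:ℂ) ∈ ball (0:ℂ) 1 := by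
    rw [mem_ball_iff_abs, Complex.norm_real, Real.norm_eq_abs, abs_of_pos hs0]; exact hs1
  have h0mem : (0:ℂ) ∈ ball (0:ℂ) 1 := by rw [mem_ball_iff_abs]; simp
  set χ : ℂ → X := fun ζ => lam • φ ζ + (1 - lam) • ψ ζ with hχdef
  have hχd : DifferentiableOn ℂ χ (ball 0 1) :=
    (hφd.const_smul lam).add (hψd.const_smul (1 - lam))
  have hχm : MapsTo χ (ball (0:ℂ) 1) D := by
    intro z hz
    exact hDc (hφm hz) (hψm hz) hlam0 (by linarith) (by ring)
  have hone : lam + (1 - lam) = 1 := by ring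
  have hχ0 : χ 0 = p := by
    rw [hχdef]; simp only [hφ0, hψ0, ← add_smul, hone, one_smul]
  have hχs : χ (s:ℂ) = q := by
    rw [hχdef]; simp only [hφs, hψs, ← add_smul, hone, one_smul]
  have hC : carath D p q = artanh s := by
    have h := hφg 0 h0mem (s:ℂ) hsmem
    rw [hφ0, hφs] at h
    rw [h, poincare_eq, pd_zero_left, Complex.norm_real, Real.norm_eq_abs, abs_of_pos hs0]
  refine ⟨⟨hχd, hχm, ?_⟩, hχ0, hχs⟩
  intro u hu v hv
  have hua := mem_ball_iff_abs.mp hu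
  have hva := mem_ball_iff_abs.mp hv
  have hbdd := bdd_carathSet hχd hχm hu hv
  have hne : Set.Nonempty {r : ℝ | ∃ f : X → ℂ, DifferentiableOn ℂ f D ∧
      MapsTo f D (ball (0:ℂ) 1) ∧ r = poincare (f (χ u)) (f (χ v))} :=
    ⟨0, zero_mem_carathSet D (χ u) (χ v)⟩
  have hle : carath D (χ u) (χ v) ≤ poincare u v := by
    apply csSup_le hne
    rintro r ⟨f, h1, h2, rfl⟩
    exact r_le_poincare hχd hχm hu hv h1 h2
  rcases eq_or_ne u v with rfl | huv
  · have h1 : poincare u u = 0 := by rw [poincare_eq, pd_self, artanh_zero]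
    have h2 : 0 ≤ carath D (χ u) (χ u) :=
      le_csSup hbdd (zero_mem_carathSet D (χ u) (χ u))
    rw [h1]
    have := hle
    rw [h1] at this
    linarith
  · apply le_antisymm hle
    rcases eq_or_ne u (s:ℂ) with rfl | hus
    · have := poincare_le_carath hχd hχm hs0 hs1 hχ0 hχs hC hv hsmem
        (Ne.symm huv) (Ne.symm huv)
      rw [poincare_symm (s:ℂ) v, carath_symm D (χ (s:ℂ)) (χ v)]
      exact this
    · exact poincare_le_carath hχd hχm hs0 hs1 hχ0 hχs hC hu hv hus huv
end

section
/- Let D be a domain in a complex Banach space and φ : 𝔻 → D holomorphic. If there exist distinct points u, v ∈ 𝔻 with ρ(u,v) = C_D(φ(u), φ(v)), then ρ(z,w) = C_D(φ(z), φ(w)) for all z, w ∈ 𝔻; i.e., φ is a complex geodesic. -/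
open Metric Set

noncomputable def Complex.abs : AbsoluteValue ℂ ℝ where
  toFun z := ‖z‖
  map_mul' := norm_mul
  nonneg' := norm_nonneg
  eq_zero' _ := norm_eq_zero
  add_le' := norm_add_le

lemma Complex.norm_eq_abs (z : ℂ) : ‖z‖ = Complex.abs z := rfl

lemma Complex.abs_conj (z : ℂ) : Complex.abs ((starRingEnd ℂ) z) = Complex.abs z :=
  Complex.norm_conj z

lemma Complex.abs_apply {z : ℂ} : Complex.abs z = Real.sqrt (Complex.normSq z) :=
  Complex.norm_def z

lemma Complex.sq_abs (z : ℂ) : Complex.abs z ^ 2 = Complex.normSq z := Complex.sq_norm z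

lemma Complex.abs_ofReal (r : ℝ) : Complex.abs (r : ℂ) = |r| := Complex.norm_real r

noncomputable def pd (z w : ℂ) : ℝ := Complex.abs ((z - w) / (1 - (starRingEnd ℂ) w * z))

noncomputable def mob (a z : ℂ) : ℂ := (z - a) / (1 - (starRingEnd ℂ) a * z)

lemma abs_lt_of_mem {z : ℂ} (h : z ∈ ball (0:ℂ) 1) : Complex.abs z < 1 := by
  simpa [Complex.norm_eq_abs] using mem_ball_zero_iff.mp h

lemma mem_of_abs_lt {z : ℂ} (h : Complex.abs z < 1) : z ∈ ball (0:ℂ) 1 :=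
  mem_ball_zero_iff.mpr (by simpa [Complex.norm_eq_abs] using h)

lemma denom_ne {a z : ℂ} (ha : Complex.abs a < 1) (hz : Complex.abs z < 1) :
    (1 : ℂ) - (starRingEnd ℂ) a * z ≠ 0 := by
  intro h
  have h1 : (starRingEnd ℂ) a * z = 1 := by linear_combination -h
  have h2 := congrArg Complex.abs h1
  simp only [map_mul, Complex.abs_conj, map_one] at h2
  nlinarith [Complex.abs.nonneg a, Complex.abs.nonneg z]

lemma key_identity (z w : ℂ) :
    Complex.normSq (1 - (starRingEnd ℂ) w * z) - Complex.normSq (z - w)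
      = (1 - Complex.normSq z) * (1 - Complex.normSq w) := by
  simp only [Complex.normSq_apply, Complex.sub_re, Complex.sub_im, Complex.mul_re, Complex.mul_im,
    Complex.one_re, Complex.one_im, Complex.conj_re, Complex.conj_im]
  ring

lemma pd_nonneg (z w : ℂ) : 0 ≤ pd z w := Complex.abs.nonneg _

lemma pd_lt_one {z w : ℂ} (hz : Complex.abs z < 1) (hw : Complex.abs w < 1) : pd z w < 1 := by
  have hd : (1 : ℂ) - (starRingEnd ℂ) w * z ≠ 0 := denom_ne hw hz
  have hdpos : 0 < Complex.abs (1 - (starRingEnd ℂ) w * z) := by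
    simpa [AbsoluteValue.pos_iff] using hd
  have hzz : Complex.normSq z < 1 := by
    rw [← Complex.sq_abs]; nlinarith [Complex.abs.nonneg z]
  have hww : Complex.normSq w < 1 := by
    rw [← Complex.sq_abs]; nlinarith [Complex.abs.nonneg w]
  have hid := key_identity z w
  have hlt : Complex.normSq (z - w) < Complex.normSq (1 - (starRingEnd ℂ) w * z) := by nlinarith
  have habs : Complex.abs (z - w) < Complex.abs (1 - (starRingEnd ℂ) w * z) := by
    rw [Complex.abs_apply, Complex.abs_apply]
    exact Real.sqrt_lt_sqrt (Complex.normSq_nonneg _) hlt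
  rw [pd, map_div₀]
  exact (div_lt_one hdpos).mpr habs

lemma pd_comm (z w : ℂ) : pd z w = pd w z := by
  rw [pd, pd, map_div₀, map_div₀]
  congr 1
  · exact AbsoluteValue.map_sub Complex.abs z w
  · rw [← Complex.abs_conj (1 - (starRingEnd ℂ) w * z)]
    congr 1
    simp [map_sub, map_mul, mul_comm]

lemma pd_eq_abs_mob (z w : ℂ) : pd z w = Complex.abs (mob w z) := rfl

lemma mob_self {a : ℂ} (ha : Complex.abs a < 1) : mob a a = 0 := by
  rw [mob, sub_self, zero_div]

lemma mob_abs_lt {a z : ℂ} (ha : Complex.abs a < 1) (hz : Complex.abs z < 1) :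
    Complex.abs (mob a z) < 1 := pd_lt_one hz ha

lemma mob_mapsTo {a : ℂ} (ha : Complex.abs a < 1) :
    MapsTo (mob a) (ball (0:ℂ) 1) (ball (0:ℂ) 1) := fun z hz =>
  mem_of_abs_lt (mob_abs_lt ha (abs_lt_of_mem hz))

lemma mob_diff {a : ℂ} (ha : Complex.abs a < 1) :
    DifferentiableOn ℂ (mob a) (ball (0:ℂ) 1) := by
  apply DifferentiableOn.div
  · exact (differentiable_id.sub_const a).differentiableOn
  · exact ((differentiable_const _).sub ((differentiable_const _).mul differentiable_id)).differentiableOn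
  · intro z hz
    exact denom_ne ha (abs_lt_of_mem hz)

lemma mob_inv {a z : ℂ} (ha : Complex.abs a < 1) (hz : Complex.abs z < 1) :
    mob (-a) (mob a z) = z := by
  have h1 : (1 : ℂ) - (starRingEnd ℂ) a * z ≠ 0 := denom_ne ha hz
  have h2 : (1 : ℂ) - (starRingEnd ℂ) a * a ≠ 0 := denom_ne ha ha
  rw [mob, mob]
  have key : (1 : ℂ) - (starRingEnd ℂ) (-a) * ((z - a) / (1 - (starRingEnd ℂ) a * z))
      = (1 - (starRingEnd ℂ) a * a) / (1 - (starRingEnd ℂ) a * z) := by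
    rw [eq_div_iff h1, sub_mul, one_mul, mul_assoc, div_mul_cancel₀ _ h1, map_neg]
    ring
  rw [key, div_eq_iff (div_ne_zero h2 h1)]
  rw [mul_div_assoc', eq_div_iff h1, sub_mul, div_mul_cancel₀ _ h1]
  ring

lemma mob_neg_zero (a : ℂ) : mob (-a) 0 = a := by
  simp [mob]

lemma schwarz_pick {g : ℂ → ℂ} (hgd : DifferentiableOn ℂ g (ball 0 1))
    (hgm : MapsTo g (ball (0:ℂ) 1) (ball (0:ℂ) 1))
    {z w : ℂ} (hz : z ∈ ball (0:ℂ) 1) (hw : w ∈ ball (0:ℂ) 1) :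
    pd (g z) (g w) ≤ pd z w := by
  have haz : Complex.abs z < 1 := abs_lt_of_mem hz
  have haw : Complex.abs w < 1 := abs_lt_of_mem hw
  have hanw : Complex.abs (-w) < 1 := by rwa [AbsoluteValue.map_neg]
  have hgw : Complex.abs (g w) < 1 := abs_lt_of_mem (hgm hw)
  set G : ℂ → ℂ := fun ζ => mob (g w) (g (mob (-w) ζ)) with hG
  have hGd : DifferentiableOn ℂ G (ball 0 1) :=
    (mob_diff hgw).comp (hgd.comp (mob_diff hanw) (mob_mapsTo hanw))
      ((hgm.comp (mob_mapsTo hanw)))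
  have hGm : MapsTo G (ball (0:ℂ) 1) (ball (0:ℂ) 1) :=
    (mob_mapsTo hgw).comp (hgm.comp (mob_mapsTo hanw))
  have hG0 : G 0 = 0 := by
    rw [hG]; simp only [mob_neg_zero]; exact mob_self hgw
  have hζ : mob w z ∈ ball (0:ℂ) 1 := mob_mapsTo haw hz
  have key := Complex.dist_le_div_mul_dist_of_mapsTo_ball hGd (by rw [hG0]; exact hGm.mono_right ball_subset_closedBall) hζ
  rw [Complex.dist_eq, Complex.dist_eq, hG0, sub_zero, sub_zero, div_one, one_mul] at key
  have hGval : G (mob w z) = mob (g w) (g z) := by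
    rw [hG]; simp only [mob_inv haw haz]
  rw [hGval] at key
  rw [pd_eq_abs_mob, pd_eq_abs_mob]
  exact key

lemma pd_mob {a p q : ℂ} (ha : Complex.abs a < 1) (hp : Complex.abs p < 1)
    (hq : Complex.abs q < 1) : pd (mob a p) (mob a q) = pd p q := by
  have hna : Complex.abs (-a) < 1 := by rwa [AbsoluteValue.map_neg]
  apply le_antisymm
  · exact schwarz_pick (mob_diff ha) (mob_mapsTo ha) (mem_of_abs_lt hp) (mem_of_abs_lt hq)
  · have := schwarz_pick (mob_diff hna) (mob_mapsTo hna)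
      (mem_of_abs_lt (mob_abs_lt ha hp)) (mem_of_abs_lt (mob_abs_lt ha hq))
    rwa [mob_inv ha hp, mob_inv ha hq] at this

noncomputable def Kc (u v z w : ℂ) : ℝ :=
  max (pd (mob u z) (mob u v)) (pd (mob u w) (mob u v))

noncomputable def ee (u v z w : ℂ) (t : ℝ) : ℝ :=
  Real.sqrt ((Kc u v z w) ^ 2 * (1 - t ^ 2) / (1 - (Kc u v z w) ^ 2))

noncomputable def Ff (u v z w : ℂ) (t : ℝ) : ℝ :=
  (t * Complex.abs (mob u z - mob u w) - 2 * ee u v z w t) /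
    (Complex.abs (1 - (starRingEnd ℂ) (mob u w) * mob u z) + (1 - t ^ 2) + 2 * ee u v z w t)

lemma close_est {p q : ℂ} {K t : ℝ} (hp : Complex.abs p < 1) (hq : Complex.abs q < 1)
    (ht0 : 0 ≤ t) (hqt : t ≤ Complex.abs q) (hK0 : 0 ≤ K) (hK1 : K < 1)
    (hpd : pd p q ≤ K) : Complex.abs (p - q) ≤ Real.sqrt (K ^ 2 * (1 - t ^ 2) / (1 - K ^ 2)) := by
  have hd : (1 : ℂ) - (starRingEnd ℂ) q * p ≠ 0 := denom_ne hq hp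
  have hdpos : 0 < Complex.abs (1 - (starRingEnd ℂ) q * p) := by
    simpa [AbsoluteValue.pos_iff] using hd
  have h1 : Complex.abs (p - q) ≤ K * Complex.abs (1 - (starRingEnd ℂ) q * p) := by
    have := hpd
    rw [pd, map_div₀, div_le_iff₀ hdpos] at this
    exact this
  have h2 : Complex.normSq (p - q) ≤ K ^ 2 * Complex.normSq (1 - (starRingEnd ℂ) q * p) := by
    rw [← Complex.sq_abs, ← Complex.sq_abs]
    nlinarith [Complex.abs.nonneg (p - q), Complex.abs.nonneg (1 - (starRingEnd ℂ) q * p)]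
  have hid := key_identity p q
  have hq2 : t ^ 2 ≤ Complex.normSq q := by
    rw [← Complex.sq_abs]; nlinarith
  have hp2 : 0 ≤ Complex.normSq p := Complex.normSq_nonneg p
  have hq1 : Complex.normSq q ≤ 1 := by
    rw [← Complex.sq_abs]; nlinarith [Complex.abs.nonneg q]
  have hp1 : Complex.normSq p ≤ 1 := by
    rw [← Complex.sq_abs]; nlinarith [Complex.abs.nonneg p]
  have hA : (1 - Complex.normSq p) * (1 - Complex.normSq q) ≤ 1 * (1 - t ^ 2) :=
    mul_le_mul (by linarith) (by linarith) (by linarith) (by norm_num)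
  have hB := mul_le_mul_of_nonneg_left hA (sq_nonneg K)
  have h3 : Complex.normSq (p - q) * (1 - K ^ 2) ≤ K ^ 2 * (1 - t ^ 2) := by nlinarith
  have h4 : Complex.normSq (p - q) ≤ K ^ 2 * (1 - t ^ 2) / (1 - K ^ 2) := by
    rw [le_div_iff₀ (by nlinarith : (0:ℝ) < 1 - K ^ 2)]
    linarith
  calc Complex.abs (p - q) = Real.sqrt (Complex.normSq (p - q)) := Complex.abs_apply
    _ ≤ _ := Real.sqrt_le_sqrt h4

lemma artanh_le_artanh {x y : ℝ} (hx : -1 < x) (hxy : x ≤ y) (hy : y < 1) :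
    artanh x ≤ artanh y := by
  have h1 : (0:ℝ) < 1 - x := by linarith
  have h2 : (0:ℝ) < 1 - y := by linarith
  have h3 : (0:ℝ) < 1 + x := by linarith
  have h5 : (1 + x) / (1 - x) ≤ (1 + y) / (1 - y) := by
    rw [div_le_div_iff₀ h1 h2]; nlinarith
  have := Real.log_le_log (by positivity) h5
  unfold artanh; linarith

lemma artanh_lt_artanh {x y : ℝ} (hx : -1 < x) (hxy : x < y) (hy : y < 1) :
    artanh x < artanh y := by
  have h1 : (0:ℝ) < 1 - x := by linarith
  have h2 : (0:ℝ) < 1 - y := by linarith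
  have h3 : (0:ℝ) < 1 + x := by linarith
  have h5 : (1 + x) / (1 - x) < (1 + y) / (1 - y) := by
    rw [div_lt_div_iff₀ h1 h2]; nlinarith
  have := Real.log_lt_log (by positivity) h5
  unfold artanh; linarith

lemma artanh_zero : artanh 0 = 0 := by simp [artanh]

set_option maxHeartbeats 2000000 in
lemma main_est {g : ℂ → ℂ} (hgd : DifferentiableOn ℂ g (ball 0 1))
    (hgm : MapsTo g (ball (0:ℂ) 1) (ball (0:ℂ) 1))
    {u v z w : ℂ} (hu : Complex.abs u < 1) (hv : Complex.abs v < 1)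
    (hz : Complex.abs z < 1) (hw : Complex.abs w < 1) (huv : u ≠ v)
    {t : ℝ} (ht0 : 0 ≤ t) (ht1 : t ≤ 1)
    (hlb : t * pd u v ≤ pd (g u) (g v)) :
    Ff u v z w t ≤ pd (g z) (g w) := by
  have hnu : Complex.abs (-u) < 1 := by rwa [AbsoluteValue.map_neg]
  have hgu : Complex.abs (g u) < 1 := abs_lt_of_mem (hgm (mem_of_abs_lt hu))
  have hgz : Complex.abs (g z) < 1 := abs_lt_of_mem (hgm (mem_of_abs_lt hz))
  have hgw : Complex.abs (g w) < 1 := abs_lt_of_mem (hgm (mem_of_abs_lt hw))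
  set ζ0 := mob u v with hζ0def
  set ζz := mob u z with hζzdef
  set ζw := mob u w with hζwdef
  have hζ0 : Complex.abs ζ0 < 1 := mob_abs_lt hu hv
  have hζz : Complex.abs ζz < 1 := mob_abs_lt hu hz
  have hζw : Complex.abs ζw < 1 := mob_abs_lt hu hw
  set G : ℂ → ℂ := fun ζ => mob (g u) (g (mob (-u) ζ)) with hG
  have hGd : DifferentiableOn ℂ G (ball 0 1) :=
    (mob_diff hgu).comp (hgd.comp (mob_diff hnu) (mob_mapsTo hnu))
      (hgm.comp (mob_mapsTo hnu))
  have hGm : MapsTo G (ball (0:ℂ) 1) (ball (0:ℂ) 1) :=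
    (mob_mapsTo hgu).comp (hgm.comp (mob_mapsTo hnu))
  have hG0 : G 0 = 0 := by rw [hG]; simp only [mob_neg_zero]; exact mob_self hgu
  have hGx : ∀ x : ℂ, Complex.abs x < 1 → G (mob u x) = mob (g u) (g x) := fun x hx => by
    rw [hG]; simp only [mob_inv hu hx]
  set H : ℂ → ℂ := dslope G 0 with hHdef
  have hHd : DifferentiableOn ℂ H (ball 0 1) :=
    (Complex.differentiableOn_dslope (isOpen_ball.mem_nhds (mem_ball_self one_pos))).mpr hGd
  have hGH : ∀ ζ : ℂ, G ζ = ζ * H ζ := by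
    intro ζ
    rcases eq_or_ne ζ 0 with rfl | hne
    · simp [hG0]
    · rw [hHdef, dslope_of_ne _ hne, slope_def_field, hG0]
      field_simp
      ring
  have hH1 : ∀ ζ ∈ ball (0:ℂ) 1, Complex.abs (H ζ) ≤ 1 := by
    intro ζ hζ
    have := Complex.norm_dslope_le_div_of_mapsTo_ball hGd (by rw [hG0]; exact hGm.mono_right ball_subset_closedBall) hζ
    simpa [hHdef, Complex.norm_eq_abs] using this
  -- the point ζ0 and the bound on |H ζ0|
  have hζ0ne : ζ0 ≠ 0 := by
    rw [hζ0def, mob]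
    exact div_ne_zero (sub_ne_zero.mpr (Ne.symm huv)) (denom_ne hu hv)
  have hs0 : 0 < Complex.abs ζ0 := Complex.abs.pos hζ0ne
  have hpduv : pd u v = Complex.abs ζ0 := by rw [pd_comm, pd_eq_abs_mob]
  have hHζ0 : t ≤ Complex.abs (H ζ0) := by
    have e1 : pd (g u) (g v) = Complex.abs ζ0 * Complex.abs (H ζ0) := by
      rw [pd_comm, pd_eq_abs_mob, ← hGx v hv, hGH ζ0, map_mul]
    rw [e1, hpduv] at hlb
    have := (mul_le_mul_iff_right₀ hs0).mp (by linarith : Complex.abs ζ0 * t ≤ Complex.abs ζ0 * Complex.abs (H ζ0))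
    exact this
  have hK1 : Kc u v z w < 1 := max_lt (pd_lt_one hζz hζ0) (pd_lt_one hζw hζ0)
  have hK0 : 0 ≤ Kc u v z w := le_trans (pd_nonneg _ _) (le_max_left _ _)
  set e := ee u v z w t with hedef
  have he0 : 0 ≤ e := Real.sqrt_nonneg _
  set q1 := Complex.abs (ζz - ζw) with hq1def
  set q2 := Complex.abs (1 - (starRingEnd ℂ) ζw * ζz) with hq2def
  have hq1nn : 0 ≤ q1 := Complex.abs.nonneg _
  have hq2pos : 0 < q2 := Complex.abs.pos (denom_ne hζw hζz)
  have ht2 : t ^ 2 ≤ 1 := by nlinarith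
  set A := G ζz with hAdef
  set B := G ζw with hBdef
  have habsA : Complex.abs A < 1 := abs_lt_of_mem (hGm (mem_of_abs_lt hζz))
  have habsB : Complex.abs B < 1 := abs_lt_of_mem (hGm (mem_of_abs_lt hζw))
  have hApd : pd (g z) (g w) = Complex.abs (A - B) / Complex.abs (1 - (starRingEnd ℂ) B * A) := by
    have h1 : pd (g z) (g w) = pd (mob (g u) (g z)) (mob (g u) (g w)) :=
      (pd_mob hgu hgz hgw).symm
    rw [h1, ← hGx z hz, ← hGx w hw, ← hAdef, ← hBdef, pd, map_div₀]
  have hFf : Ff u v z w t = (t * q1 - 2 * e) / (q2 + (1 - t ^ 2) + 2 * e) := rfl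
  by_cases hcase : ∀ ζ ∈ ball (0:ℂ) 1, Complex.abs (H ζ) < 1
  · -- H is a self-map of the disc
    have hHm : MapsTo H (ball (0:ℂ) 1) (ball (0:ℂ) 1) := fun ζ hζ => mem_of_abs_lt (hcase ζ hζ)
    set c := H ζ0 with hcdef
    have hc1 : Complex.abs c < 1 := hcase _ (mem_of_abs_lt hζ0)
    have hez : Complex.abs (H ζz - c) ≤ e := by
      have hpdK : pd (H ζz) c ≤ Kc u v z w :=
        le_trans (schwarz_pick hHd hHm (mem_of_abs_lt hζz) (mem_of_abs_lt hζ0)) (le_max_left _ _)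
      have := close_est (hcase _ (mem_of_abs_lt hζz)) hc1 ht0 hHζ0 hK0 hK1 hpdK
      simpa [hedef, ee] using this
    have hew : Complex.abs (H ζw - c) ≤ e := by
      have hpdK : pd (H ζw) c ≤ Kc u v z w :=
        le_trans (schwarz_pick hHd hHm (mem_of_abs_lt hζw) (mem_of_abs_lt hζ0)) (le_max_right _ _)
      have := close_est (hcase _ (mem_of_abs_lt hζw)) hc1 ht0 hHζ0 hK0 hK1 hpdK
      simpa [hedef, ee] using this
    have hHz1 : Complex.abs (H ζz) ≤ 1 := (hcase _ (mem_of_abs_lt hζz)).le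
    have hHw1 : Complex.abs (H ζw) ≤ 1 := (hcase _ (mem_of_abs_lt hζw)).le
    -- lower bound on |A - B|
    have n1 : t * q1 - 2 * e ≤ Complex.abs (A - B) := by
      have hdecomp : c * (ζz - ζw) = (A - B) + -(ζz * (H ζz - c)) + ζw * (H ζw - c) := by
        rw [hAdef, hBdef, hGH ζz, hGH ζw]; ring
      have htri : Complex.abs (c * (ζz - ζw)) ≤
          Complex.abs (A - B) + Complex.abs (ζz * (H ζz - c)) + Complex.abs (ζw * (H ζw - c)) := by
        rw [hdecomp]
        refine le_trans (Complex.abs.add_le _ _) ?_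
        have h1 := Complex.abs.add_le (A - B) (-(ζz * (H ζz - c)))
        rw [AbsoluteValue.map_neg] at h1
        linarith
      have h2 : Complex.abs (ζz * (H ζz - c)) ≤ 1 * e := by
        rw [map_mul]
        exact mul_le_mul hζz.le hez (Complex.abs.nonneg _) zero_le_one
      have h3 : Complex.abs (ζw * (H ζw - c)) ≤ 1 * e := by
        rw [map_mul]
        exact mul_le_mul hζw.le hew (Complex.abs.nonneg _) zero_le_one
      have h4 : Complex.abs (c * (ζz - ζw)) = Complex.abs c * q1 := map_mul _ _ _
      have h5 : t * q1 ≤ Complex.abs c * q1 := mul_le_mul_of_nonneg_right hHζ0 hq1nn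
      linarith
    -- upper bound on |1 - conj B * A|
    have n2 : Complex.abs (1 - (starRingEnd ℂ) B * A) ≤ q2 + (1 - t ^ 2) + 2 * e := by
      have hdecomp : (1 : ℂ) - (starRingEnd ℂ) B * A =
          (1 - (starRingEnd ℂ) ζw * ζz)
          + ((starRingEnd ℂ) ζw * ζz) * (1 - (starRingEnd ℂ) c * c)
          + ((starRingEnd ℂ) ζw * ζz) * ((starRingEnd ℂ) c * (c - H ζz))
          + ((starRingEnd ℂ) ζw * ζz) * (((starRingEnd ℂ) c - (starRingEnd ℂ) (H ζw)) * H ζz) := by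
        rw [hAdef, hBdef, hGH ζz, hGH ζw, map_mul]
        ring
      have hzw1 : Complex.abs ((starRingEnd ℂ) ζw * ζz) ≤ 1 := by
        rw [map_mul, Complex.abs_conj]
        exact mul_le_one₀ hζw.le (Complex.abs.nonneg _) hζz.le
      have hcc : Complex.abs (1 - (starRingEnd ℂ) c * c) ≤ 1 - t ^ 2 := by
        have h1 : (starRingEnd ℂ) c * c = (Complex.normSq c : ℂ) := by
          rw [mul_comm, Complex.mul_conj]
        rw [h1]
        have h2 : ((1 : ℂ) - (Complex.normSq c : ℂ)) = ((1 - Complex.normSq c : ℝ) : ℂ) := by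
          push_cast; ring
        rw [h2, Complex.abs_ofReal]
        have h3 : Complex.normSq c ≤ 1 := by
          rw [← Complex.sq_abs]; nlinarith [Complex.abs.nonneg c]
        have h4 : t ^ 2 ≤ Complex.normSq c := by
          rw [← Complex.sq_abs]; nlinarith
        rw [abs_of_nonneg (by linarith)]
        linarith
      have ht3 : Complex.abs ((starRingEnd ℂ) c * (c - H ζz)) ≤ e := by
        rw [map_mul, Complex.abs_conj]
        have h9 : Complex.abs (c - H ζz) = Complex.abs (H ζz - c) := AbsoluteValue.map_sub _ _ _
        rw [h9]
        calc Complex.abs c * Complex.abs (H ζz - c) ≤ 1 * e :=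
              mul_le_mul hc1.le hez (Complex.abs.nonneg _) zero_le_one
          _ = e := one_mul _
      have ht4 : Complex.abs (((starRingEnd ℂ) c - (starRingEnd ℂ) (H ζw)) * H ζz) ≤ e := by
        rw [map_mul]
        have h1 : (starRingEnd ℂ) c - (starRingEnd ℂ) (H ζw) = (starRingEnd ℂ) (c - H ζw) := by
          rw [map_sub]
        rw [h1, Complex.abs_conj]
        have h2 : Complex.abs (c - H ζw) = Complex.abs (H ζw - c) := AbsoluteValue.map_sub _ _ _
        rw [h2]
        calc Complex.abs (H ζw - c) * Complex.abs (H ζz) ≤ e * 1 :=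
              mul_le_mul hew hHz1 (Complex.abs.nonneg _) he0
          _ = e := mul_one e
      have htri : Complex.abs (1 - (starRingEnd ℂ) B * A) ≤ q2
          + Complex.abs (((starRingEnd ℂ) ζw * ζz) * (1 - (starRingEnd ℂ) c * c))
          + Complex.abs (((starRingEnd ℂ) ζw * ζz) * ((starRingEnd ℂ) c * (c - H ζz)))
          + Complex.abs (((starRingEnd ℂ) ζw * ζz) * (((starRingEnd ℂ) c - (starRingEnd ℂ) (H ζw)) * H ζz)) := by
        rw [hdecomp]
        have t1 := Complex.abs.add_le ((1 - (starRingEnd ℂ) ζw * ζz)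
          + ((starRingEnd ℂ) ζw * ζz) * (1 - (starRingEnd ℂ) c * c)
          + ((starRingEnd ℂ) ζw * ζz) * ((starRingEnd ℂ) c * (c - H ζz)))
          (((starRingEnd ℂ) ζw * ζz) * (((starRingEnd ℂ) c - (starRingEnd ℂ) (H ζw)) * H ζz))
        have t2 := Complex.abs.add_le ((1 - (starRingEnd ℂ) ζw * ζz)
          + ((starRingEnd ℂ) ζw * ζz) * (1 - (starRingEnd ℂ) c * c))
          (((starRingEnd ℂ) ζw * ζz) * ((starRingEnd ℂ) c * (c - H ζz)))
        have t3 := Complex.abs.add_le (1 - (starRingEnd ℂ) ζw * ζz)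
          (((starRingEnd ℂ) ζw * ζz) * (1 - (starRingEnd ℂ) c * c))
        linarith
      have b2 : Complex.abs (((starRingEnd ℂ) ζw * ζz) * (1 - (starRingEnd ℂ) c * c)) ≤ 1 - t ^ 2 := by
        rw [map_mul]
        calc Complex.abs ((starRingEnd ℂ) ζw * ζz) * Complex.abs (1 - (starRingEnd ℂ) c * c)
            ≤ 1 * (1 - t ^ 2) := mul_le_mul hzw1 hcc (Complex.abs.nonneg _) zero_le_one
          _ = 1 - t ^ 2 := one_mul _
      have b3 : Complex.abs (((starRingEnd ℂ) ζw * ζz) * ((starRingEnd ℂ) c * (c - H ζz))) ≤ e := by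
        rw [map_mul]
        calc Complex.abs ((starRingEnd ℂ) ζw * ζz) * Complex.abs ((starRingEnd ℂ) c * (c - H ζz))
            ≤ 1 * e := mul_le_mul hzw1 ht3 (Complex.abs.nonneg _) zero_le_one
          _ = e := one_mul _
      have b4 : Complex.abs (((starRingEnd ℂ) ζw * ζz) * (((starRingEnd ℂ) c - (starRingEnd ℂ) (H ζw)) * H ζz)) ≤ e := by
        rw [map_mul]
        calc Complex.abs ((starRingEnd ℂ) ζw * ζz) * Complex.abs (((starRingEnd ℂ) c - (starRingEnd ℂ) (H ζw)) * H ζz)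
            ≤ 1 * e := mul_le_mul hzw1 ht4 (Complex.abs.nonneg _) zero_le_one
          _ = e := one_mul _
      linarith
    rw [hApd, hFf]
    exact div_le_div₀ (Complex.abs.nonneg _) n1 (Complex.abs.pos (denom_ne habsB habsA)) n2
  · -- H attains modulus 1: it is a unimodular constant
    push_neg at hcase
    obtain ⟨ζ1, hζ1, hone⟩ := hcase
    have heq1 : Complex.abs (H ζ1) = 1 := le_antisymm (hH1 ζ1 hζ1) hone
    set c := H ζ1 with hcdef
    have hmax : IsMaxOn (norm ∘ H) (ball (0:ℂ) 1) ζ1 := by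
      apply isMaxOn_iff.mpr
      intro x hx
      simp only [Function.comp_apply, Complex.norm_eq_abs, heq1]
      exact le_trans (hH1 x hx) (le_of_eq heq1.symm)
    have hconst := Complex.eqOn_of_isPreconnected_of_isMaxOn_norm
      (convex_ball (0:ℂ) 1).isPreconnected isOpen_ball hHd hζ1 hmax
    have hcc : (starRingEnd ℂ) c * c = 1 := by
      have h1 : (starRingEnd ℂ) c * c = (Complex.normSq c : ℂ) := by
        rw [mul_comm, Complex.mul_conj]
      rw [h1]
      have : Complex.normSq c = 1 := by
        rw [← Complex.sq_abs, heq1]; norm_num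
      rw [this]; norm_num
    have hHz : H ζz = c := hconst (mem_of_abs_lt hζz)
    have hHw : H ζw = c := hconst (mem_of_abs_lt hζw)
    have hval : pd (g z) (g w) = q1 / q2 := by
      rw [hApd, hAdef, hBdef, hGH ζz, hGH ζw, hHz, hHw]
      congr 1
      · rw [hq1def]
        have : ζz * c - ζw * c = (ζz - ζw) * c := by ring
        rw [this, map_mul, heq1, mul_one]
      · rw [hq2def]
        congr 1
        rw [map_mul]
        linear_combination (-((starRingEnd ℂ) ζw * ζz)) * hcc
    rw [hval, hFf]
    refine div_le_div₀ hq1nn ?_ hq2pos ?_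
    · nlinarith
    · linarith

lemma poincare_eq_artanh_pd (z w : ℂ) : poincare z w = artanh (pd z w) := rfl

lemma artanh_contAt {x : ℝ} (h1 : -1 < x) (h2 : x < 1) : ContinuousAt artanh x := by
  have hne : (1 : ℝ) - x ≠ 0 := by intro hx; linarith [hx]
  have hq : ContinuousAt (fun y : ℝ => (1 + y) / (1 - y)) x :=
    ContinuousAt.div (by fun_prop) (by fun_prop) hne
  have hpos : 0 < (1 + x) / (1 - x) := div_pos (by linarith) (by linarith)
  have : ContinuousAt (fun y : ℝ => Real.log ((1 + y) / (1 - y)) / 2) x :=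
    (hq.log (ne_of_gt hpos)).div_const 2
  exact this

lemma ee_one (u v z w : ℂ) : ee u v z w 1 = 0 := by
  simp [ee]

lemma ee_cont (u v z w : ℂ) : Continuous (ee u v z w) := by
  unfold ee
  exact Real.continuous_sqrt.comp
    (((continuous_const.mul (continuous_const.sub (continuous_pow 2))).div_const _))

lemma Ff_one {u v z w : ℂ} (hu : Complex.abs u < 1) (hz : Complex.abs z < 1)
    (hw : Complex.abs w < 1) : Ff u v z w 1 = pd z w := by
  unfold Ff
  rw [ee_one]
  have hvz : pd z w = pd (mob u z) (mob u w) := (pd_mob hu hz hw).symm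
  rw [hvz, pd, map_div₀]
  norm_num

lemma Ff_contAt (u v z w : ℂ) (hu : Complex.abs u < 1) (hz : Complex.abs z < 1)
    (hw : Complex.abs w < 1) : ContinuousAt (Ff u v z w) 1 := by
  have hq2pos : 0 < Complex.abs (1 - (starRingEnd ℂ) (mob u w) * mob u z) :=
    Complex.abs.pos (denom_ne (mob_abs_lt hu hw) (mob_abs_lt hu hz))
  unfold Ff
  apply ContinuousAt.div
  · exact ((continuous_id.mul continuous_const).sub
      (continuous_const.mul (ee_cont u v z w))).continuousAt
  · exact (((continuous_const.add (continuous_const.sub (continuous_pow 2))).add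
      (continuous_const.mul (ee_cont u v z w)))).continuousAt
  · intro heq
    simp only [ee_one, one_pow] at heq
    nlinarith [hq2pos]

lemma Ff_gt_neg_one {u v z w : ℂ} (hu : Complex.abs u < 1) (hz : Complex.abs z < 1)
    (hw : Complex.abs w < 1) {t : ℝ} (ht0 : 0 ≤ t) (ht1 : t ≤ 1) : -1 < Ff u v z w t := by
  have hq2pos : 0 < Complex.abs (1 - (starRingEnd ℂ) (mob u w) * mob u z) :=
    Complex.abs.pos (denom_ne (mob_abs_lt hu hw) (mob_abs_lt hu hz))
  have he0 : 0 ≤ ee u v z w t := Real.sqrt_nonneg _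
  have hq1 : 0 ≤ Complex.abs (mob u z - mob u w) := Complex.abs.nonneg _
  have ht2 : t ^ 2 ≤ 1 := by nlinarith
  unfold Ff
  rw [lt_div_iff₀ (by nlinarith)]
  nlinarith [mul_nonneg ht0 hq1]

theorem stmt7 {X : Type*} [NormedAddCommGroup X] [NormedSpace ℂ X]
    (D : Set X) (hD : IsOpen D) (hDne : D.Nonempty)
    (φ : ℂ → X) (hφd : DifferentiableOn ℂ φ (ball 0 1))
    (hφm : MapsTo φ (ball (0 : ℂ) 1) D)
    (u v : ℂ) (hu : u ∈ ball (0 : ℂ) 1) (hv : v ∈ ball (0 : ℂ) 1) (huv : u ≠ v)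
    (h : poincare u v = carath D (φ u) (φ v)) :
    ∀ z ∈ ball (0 : ℂ) 1, ∀ w ∈ ball (0 : ℂ) 1,
      poincare z w = carath D (φ z) (φ w) := by
  have hau : Complex.abs u < 1 := abs_lt_of_mem hu
  have hav : Complex.abs v < 1 := abs_lt_of_mem hv
  set S : ℂ → ℂ → Set ℝ := fun z w => {r : ℝ | ∃ f : X → ℂ, DifferentiableOn ℂ f D ∧
    MapsTo f D (ball (0 : ℂ) 1) ∧ r = poincare (f (φ z)) (f (φ w))} with hS
  have hcar : ∀ z w : ℂ, carath D (φ z) (φ w) = sSup (S z w) := fun z w => rfl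
  have hne : ∀ z w : ℂ, (S z w).Nonempty := by
    intro z w
    refine ⟨0, fun _ => (0 : ℂ), differentiableOn_const _, fun x _ => mem_ball_self one_pos, ?_⟩
    simp [poincare, artanh]
  have hub : ∀ z w : ℂ, z ∈ ball (0:ℂ) 1 → w ∈ ball (0:ℂ) 1 →
      ∀ r ∈ S z w, r ≤ poincare z w := by
    rintro z w hz hw r ⟨f, hfd, hfm, rfl⟩
    have hgd : DifferentiableOn ℂ (f ∘ φ) (ball 0 1) := hfd.comp hφd hφm
    have hgm : MapsTo (f ∘ φ) (ball (0:ℂ) 1) (ball (0:ℂ) 1) := hfm.comp hφm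
    have hsp : pd (f (φ z)) (f (φ w)) ≤ pd z w := schwarz_pick hgd hgm hz hw
    rw [poincare_eq_artanh_pd, poincare_eq_artanh_pd]
    exact artanh_le_artanh (by linarith [pd_nonneg (f (φ z)) (f (φ w))]) hsp
      (pd_lt_one (abs_lt_of_mem hz) (abs_lt_of_mem hw))
  intro z hz w hw
  have haz : Complex.abs z < 1 := abs_lt_of_mem hz
  have haw : Complex.abs w < 1 := abs_lt_of_mem hw
  have hbdd : BddAbove (S z w) := ⟨poincare z w, hub z w hz hw⟩
  rw [hcar]
  refine le_antisymm ?_ (csSup_le (hne z w) (hub z w hz hw))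
  by_contra hcon
  push_neg at hcon
  -- hcon : sSup (S z w) < poincare z w
  have hs0 : 0 < pd u v :=
    Complex.abs.pos (div_ne_zero (sub_ne_zero.mpr huv) (denom_ne hav hau))
  have hs1 : pd u v < 1 := pd_lt_one hau hav
  -- continuity of t ↦ artanh (Ff u v z w t) at 1
  have hpdzw1 : pd z w < 1 := pd_lt_one haz haw
  have hcontF : ContinuousAt (fun t => artanh (Ff u v z w t)) 1 := by
    have h1 : ContinuousAt artanh (Ff u v z w 1) := by
      rw [Ff_one hau haz haw]
      exact artanh_contAt (by linarith [pd_nonneg z w]) hpdzw1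
    exact h1.comp (Ff_contAt u v z w hau haz haw)
  have hval : artanh (Ff u v z w 1) = poincare z w := by
    rw [Ff_one hau haz haw, poincare_eq_artanh_pd]
  have htendsto : Filter.Tendsto (fun t => artanh (Ff u v z w t))
      (nhdsWithin 1 (Iio 1)) (nhds (poincare z w)) := by
    have := hcontF.tendsto
    rw [hval] at this
    exact this.mono_left nhdsWithin_le_nhds
  have hev1 : ∀ᶠ t in nhdsWithin 1 (Iio 1), sSup (S z w) < artanh (Ff u v z w t) :=
    htendsto.eventually (eventually_gt_nhds hcon)
  have hIoo : Ioo (0:ℝ) 1 ∈ nhdsWithin 1 (Iio 1) :=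
    Ioo_mem_nhdsLT_of_mem (by constructor <;> norm_num)
  obtain ⟨t, hLt, ht0, ht1⟩ := (hev1.and hIoo).exists
  -- find a competitor f almost attaining the sup at (u, v)
  have hsuv : sSup (S u v) = poincare u v := by rw [← hcar]; exact h.symm
  have hts1 : t * pd u v < pd u v := by nlinarith
  have hts0 : 0 ≤ t * pd u v := mul_nonneg ht0.le hs0.le
  have hlt : artanh (t * pd u v) < sSup (S u v) := by
    rw [hsuv, poincare_eq_artanh_pd]
    exact artanh_lt_artanh (by linarith) hts1 hs1
  obtain ⟨r, hrS, hrlt⟩ := exists_lt_of_lt_csSup (hne u v) hlt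
  obtain ⟨f, hfd, hfm, rfl⟩ := hrS
  have hgd : DifferentiableOn ℂ (f ∘ φ) (ball 0 1) := hfd.comp hφd hφm
  have hgm : MapsTo (f ∘ φ) (ball (0:ℂ) 1) (ball (0:ℂ) 1) := hfm.comp hφm
  have hpdg : t * pd u v ≤ pd (f (φ u)) (f (φ v)) := by
    by_contra hcc
    push_neg at hcc
    have hup : artanh (pd (f (φ u)) (f (φ v))) ≤ artanh (t * pd u v) :=
      artanh_le_artanh (by linarith [pd_nonneg (f (φ u)) (f (φ v))]) hcc.le
        (lt_trans hts1 hs1)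
    rw [poincare_eq_artanh_pd] at hrlt
    linarith
  have hmain : Ff u v z w t ≤ pd ((f ∘ φ) z) ((f ∘ φ) w) :=
    main_est hgd hgm hau hav haz haw huv ht0.le ht1.le hpdg
  have hfz : Complex.abs (f (φ z)) < 1 := abs_lt_of_mem (hfm (hφm hz))
  have hfw : Complex.abs (f (φ w)) < 1 := abs_lt_of_mem (hfm (hφm hw))
  have hfinal : artanh (Ff u v z w t) ≤ artanh (pd (f (φ z)) (f (φ w))) :=
    artanh_le_artanh (Ff_gt_neg_one hau haz haw ht0.le ht1.le) hmain (pd_lt_one hfz hfw)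
  have hmem : poincare (f (φ z)) (f (φ w)) ∈ S z w := ⟨f, hfd, hfm, rfl⟩
  have hle := le_csSup hbdd hmem
  rw [poincare_eq_artanh_pd (f (φ z)) (f (φ w))] at hle
  linarith
end

section
/- Let X be a complex Banach space, f : 𝔻 → X* a bounded holomorphic map admitting weak* radial limits f(e^{iθ}) at almost every boundary point, and h : closed unit disc → X a continuous map holomorphic on 𝔻. Then lim_{r→1⁻} ⟨h(re^{iθ}), f(re^{iθ})⟩ = ⟨h(e^{iθ}), f(e^{iθ})⟩ for almost every θ, and for each ζ ∈ 𝔻 the value ⟨h(ζ), f(ζ)⟩ equals the Poisson integral (1/2π) ∫₀^{2π} ⟨h(e^{iθ}), f(e^{iθ})⟩ · (1−|ζ|²)/(1+|ζ|² − 2Re(e^{−iθ}ζ)) dθ. -/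
open Metric Set Complex Filter

lemma denom_pos {ζ : ℂ} (hζ : ‖ζ‖ < 1) (θ : ℝ) :
    0 < 1 + ‖ζ‖ ^ 2 - 2 * (Complex.exp (-(θ : ℂ) * I) * ζ).re := by
  have hv : ‖Complex.exp (-(θ:ℂ) * I)‖ = 1 := by
    rw [show (-(θ:ℂ) * I) = ((-θ : ℝ):ℂ) * I by push_cast; ring]
    exact Complex.norm_exp_ofReal_mul_I _
  have h1 : (Complex.exp (-(θ:ℂ) * I) * ζ).re ≤ ‖ζ‖ := by
    calc (Complex.exp (-(θ:ℂ) * I) * ζ).re ≤ ‖Complex.exp (-(θ:ℂ) * I) * ζ‖ :=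
      Complex.re_le_norm _
    _ = ‖ζ‖ := by rw [norm_mul, hv, one_mul]
  nlinarith [sq_nonneg (1 - ‖ζ‖)]

lemma key_scalar {ζ w b : ℂ} (hw : w ≠ 0) (hwζ : w - ζ ≠ 0) (hbw : b * w - 1 ≠ 0) :
    w * I * ((w - ζ)⁻¹ - b * (b * w - 1)⁻¹) =
      I * ((1 - ζ * b) / (1 + ζ * b - (w⁻¹ * ζ + w * b))) := by
  have hX : 1 + ζ * b - (w⁻¹ * ζ + w * b) = -((w - ζ) * (b * w - 1)) / w := by
    field_simp; ring
  rw [hX]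
  rw [div_div_eq_mul_div, ← mul_div_assoc, eq_div_iff (neg_ne_zero.mpr (mul_ne_zero hwζ hbw))]
  linear_combination (-w*I*(b*w-1)) * mul_inv_cancel₀ hwζ + (w*I*b*(w-ζ)) * mul_inv_cancel₀ hbw

lemma poissonFormula {R : ℝ} (hR : 1 < R) (G : ℂ → ℂ) (hG : DifferentiableOn ℂ G (ball 0 R))
    {ζ : ℂ} (hζ : ‖ζ‖ < 1) :
    G ζ = (2 * Real.pi)⁻¹ *
      ∫ θ in (0:ℝ)..(2 * Real.pi),
        G (Complex.exp (θ * I)) *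
          (((1 - ‖ζ‖ ^ 2) /
            (1 + ‖ζ‖ ^ 2 - 2 * (Complex.exp (-(θ : ℂ) * I) * ζ).re) : ℝ) : ℂ) := by
  have hsub : closedBall (0:ℂ) 1 ⊆ ball 0 R := closedBall_subset_ball hR
  have hsub' : ball (0:ℂ) 1 ⊆ ball 0 R := ball_subset_ball hR.le
  have hGc : ContinuousOn G (closedBall 0 1) := hG.continuousOn.mono hsub
  have hζb : ζ ∈ ball (0:ℂ) 1 := by simpa [mem_ball_zero_iff] using hζ
  have hGd1 : DiffContOnCl ℂ G (ball 0 1) :=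
    ⟨hG.mono hsub', by rwa [closure_ball (0:ℂ) one_ne_zero]⟩
  have h1 : (∮ z in C(0, 1), (z - ζ)⁻¹ • G z) = (2 * Real.pi * I : ℂ) • G ζ :=
    hGd1.circleIntegral_sub_inv_smul hζb
  have hne2 : ∀ z : ℂ, ‖z‖ ≤ 1 → (starRingEnd ℂ) ζ * z - 1 ≠ 0 := by
    intro z hz h
    have : ‖(starRingEnd ℂ) ζ * z‖ = 1 := by
      rw [show (starRingEnd ℂ) ζ * z = 1 from by linear_combination h]; simp
    rw [norm_mul, Complex.norm_conj] at this
    nlinarith [norm_nonneg z, norm_nonneg ζ]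
  have h2 : (∮ z in C(0, 1),
      ((starRingEnd ℂ) ζ * ((starRingEnd ℂ) ζ * z - 1)⁻¹) * G z) = 0 := by
    apply Complex.circleIntegral_eq_zero_of_differentiable_on_off_countable zero_le_one
      countable_empty
    · apply ContinuousOn.mul _ hGc
      apply continuousOn_const.mul
      apply ContinuousOn.inv₀
      · fun_prop
      · intro z hz
        exact hne2 z (by simpa [mem_closedBall_zero_iff] using hz)
    · rintro z ⟨hz, -⟩
      have hz1 : ‖z‖ < 1 := by simpa [mem_ball_zero_iff] using hz
      apply DifferentiableAt.mul
      · apply DifferentiableAt.mul (differentiableAt_const _)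
        apply DifferentiableAt.inv
        · fun_prop
        · exact hne2 z hz1.le
      · exact hG.differentiableAt (isOpen_ball.mem_nhds (hsub' hz))
  -- continue
  have hπ : (0:ℝ) < Real.pi := Real.pi_pos
  have hwa : ∀ θ : ℝ, ‖circleMap 0 1 θ‖ = 1 := fun θ => by
    simpa using norm_circleMap_zero 1 θ
  have hmem : ∀ θ : ℝ, circleMap 0 1 θ ∈ ball (0:ℂ) R := fun θ => by
    simp only [mem_ball_zero_iff, hwa]; linarith
  have hGcont : Continuous fun θ : ℝ => G (circleMap 0 1 θ) :=
    hG.continuousOn.comp_continuous (continuous_circleMap 0 1) hmem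
  have hwζ : ∀ θ : ℝ, circleMap 0 1 θ - ζ ≠ 0 := fun θ => by
    intro hz
    rw [sub_eq_zero] at hz
    rw [← hz, hwa] at hζ
    exact lt_irrefl _ hζ
  have hbwne : ∀ θ : ℝ, (starRingEnd ℂ) ζ * circleMap 0 1 θ - 1 ≠ 0 := fun θ =>
    hne2 _ (le_of_eq (hwa θ))
  have hc1 : Continuous fun θ : ℝ =>
      deriv (circleMap 0 1) θ • ((circleMap 0 1 θ - ζ)⁻¹ • G (circleMap 0 1 θ)) := by
    simp only [deriv_circleMap, smul_eq_mul]
    exact ((continuous_circleMap 0 1).mul continuous_const).mul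
      ((((continuous_circleMap 0 1).sub continuous_const).inv₀ hwζ).mul hGcont)
  have hc2 : Continuous fun θ : ℝ =>
      deriv (circleMap 0 1) θ •
        (((starRingEnd ℂ) ζ * ((starRingEnd ℂ) ζ * circleMap 0 1 θ - 1)⁻¹) *
          G (circleMap 0 1 θ)) := by
    simp only [deriv_circleMap, smul_eq_mul]
    have hinv : Continuous fun θ : ℝ =>
        ((starRingEnd ℂ) ζ * circleMap 0 1 θ - 1)⁻¹ :=
      Continuous.inv₀ ((continuous_const.mul (continuous_circleMap 0 1)).sub continuous_const)
        hbwne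
    exact ((continuous_circleMap 0 1).mul continuous_const).mul
      ((continuous_const.mul hinv).mul hGcont)
  have key : ∀ θ : ℝ,
      deriv (circleMap 0 1) θ • ((circleMap 0 1 θ - ζ)⁻¹ • G (circleMap 0 1 θ)) -
        deriv (circleMap 0 1) θ •
          (((starRingEnd ℂ) ζ * ((starRingEnd ℂ) ζ * circleMap 0 1 θ - 1)⁻¹) *
            G (circleMap 0 1 θ)) =
      I * (G (Complex.exp (θ * I)) *
        (((1 - ‖ζ‖ ^ 2) /
          (1 + ‖ζ‖ ^ 2 - 2 * (Complex.exp (-(θ : ℂ) * I) * ζ).re) : ℝ) : ℂ)) := by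
    intro θ
    have hwζ' := hwζ θ
    have hbw' := hbwne θ
    simp only [deriv_circleMap, smul_eq_mul, circleMap_zero, Complex.ofReal_one, one_mul] at *
    set w := Complex.exp ((θ:ℂ) * I) with hw
    set b := (starRingEnd ℂ) ζ with hb
    have hw0 : w ≠ 0 := Complex.exp_ne_zero _
    have hv : Complex.exp (-(θ:ℂ) * I) = w⁻¹ := by
      rw [show -(θ:ℂ) * I = -((θ:ℂ) * I) by ring, Complex.exp_neg]
    have hconjw : (starRingEnd ℂ) w = w⁻¹ := by
      rw [hw, ← Complex.exp_conj]
      rw [show (starRingEnd ℂ) ((θ:ℂ) * I) = -((θ:ℂ) * I) by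
        simp [Complex.conj_I]]
      rw [Complex.exp_neg]
    have habs : ((‖ζ‖ ^ 2 : ℝ) : ℂ) = ζ * b := by
      rw [← Complex.normSq_eq_norm_sq, hb, Complex.mul_conj]
    have hre : (((w⁻¹ * ζ).re : ℝ) : ℂ) * 2 = w⁻¹ * ζ + w * b := by
      have h1 := Complex.add_conj (w⁻¹ * ζ)
      have h2 : (starRingEnd ℂ) (w⁻¹ * ζ) = w * b := by
        rw [map_mul, map_inv₀, hconjw, inv_inv, hb]
      rw [h2] at h1
      push_cast at h1 ⊢
      linear_combination -h1
    have hcast : (((1 - ‖ζ‖ ^ 2) /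
        (1 + ‖ζ‖ ^ 2 - 2 * (Complex.exp (-(θ:ℂ) * I) * ζ).re) : ℝ) : ℂ) =
        (1 - ζ * b) / (1 + ζ * b - (w⁻¹ * ζ + w * b)) := by
      rw [hv]
      have habs' : ((‖ζ‖ : ℝ) : ℂ) ^ 2 = ζ * b := by push_cast at habs; exact habs
      push_cast
      rw [habs']
      congr 1
      linear_combination -hre
    rw [hcast]
    have hks := key_scalar (ζ := ζ) (w := w) (b := b) hw0 hwζ' hbw'
    linear_combination G w * hks
  have hint1 : IntervalIntegrable (fun θ : ℝ =>
      deriv (circleMap 0 1) θ • ((circleMap 0 1 θ - ζ)⁻¹ • G (circleMap 0 1 θ)))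
      MeasureTheory.volume 0 (2*Real.pi) := hc1.intervalIntegrable 0 (2*Real.pi)
  have hint2 : IntervalIntegrable (fun θ : ℝ =>
      deriv (circleMap 0 1) θ •
        (((starRingEnd ℂ) ζ * ((starRingEnd ℂ) ζ * circleMap 0 1 θ - 1)⁻¹) *
          G (circleMap 0 1 θ))) MeasureTheory.volume 0 (2*Real.pi) := hc2.intervalIntegrable 0 (2*Real.pi)
  have hmain : (2 * (Real.pi:ℂ) * I) * G ζ =
      I * ∫ θ in (0:ℝ)..(2*Real.pi),
        G (Complex.exp (θ * I)) *
          (((1 - ‖ζ‖ ^ 2) /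
            (1 + ‖ζ‖ ^ 2 - 2 * (Complex.exp (-(θ : ℂ) * I) * ζ).re) : ℝ) : ℂ) := by
    rw [← smul_eq_mul, ← h1, ← intervalIntegral.integral_const_mul]
    have hsplit : (∮ z in C(0, 1), (z - ζ)⁻¹ • G z) =
        (∮ z in C(0, 1), (z - ζ)⁻¹ • G z) -
          (∮ z in C(0, 1), ((starRingEnd ℂ) ζ * ((starRingEnd ℂ) ζ * z - 1)⁻¹) * G z) := by
      rw [h2, sub_zero]
    rw [hsplit]
    simp only [circleIntegral]
    rw [← intervalIntegral.integral_sub hint1 hint2]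
    exact intervalIntegral.integral_congr fun θ _ => key θ
  have h2pi : ((2 * Real.pi : ℝ) : ℂ) ≠ 0 := by
    exact_mod_cast (by positivity : (2*Real.pi:ℝ) ≠ 0)
  have h2pi' : (2 * (Real.pi:ℂ)) ≠ 0 := by push_cast at h2pi; exact h2pi
  have hfin : (2 * (Real.pi:ℂ)) * G ζ = ∫ θ in (0:ℝ)..(2*Real.pi),
      G (Complex.exp (θ * I)) *
        (((1 - ‖ζ‖ ^ 2) /
          (1 + ‖ζ‖ ^ 2 - 2 * (Complex.exp (-(θ : ℂ) * I) * ζ).re) : ℝ) : ℂ) := by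
    apply mul_left_cancel₀ Complex.I_ne_zero
    linear_combination hmain
  rw [← hfin]
  push_cast
  field_simp

theorem stmt10 {X : Type*} [NormedAddCommGroup X] [NormedSpace ℂ X]
    (f : ℂ → (X →L[ℂ] ℂ)) (hf : DifferentiableOn ℂ f (ball 0 1))
    (hfb : Bornology.IsBounded (f '' ball 0 1))
    (fb : ℝ → (X →L[ℂ] ℂ))
    (hlim : ∀ᵐ θ : ℝ, ∀ x : X,
      Tendsto (fun r : ℝ => f ((r : ℂ) * Complex.exp (θ * I)) x)
        (nhdsWithin 1 (Iio 1)) (nhds (fb θ x)))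
    (h : ℂ → X) (hc : ContinuousOn h (closedBall 0 1))
    (hh : DifferentiableOn ℂ h (ball 0 1)) :
    (∀ᵐ θ : ℝ,
      Tendsto (fun r : ℝ =>
          f ((r : ℂ) * Complex.exp (θ * I)) (h ((r : ℂ) * Complex.exp (θ * I))))
        (nhdsWithin 1 (Iio 1)) (nhds (fb θ (h (Complex.exp (θ * I)))))) ∧
    ∀ ζ ∈ ball (0 : ℂ) 1,
      f ζ (h ζ) = (2 * Real.pi)⁻¹ *
        ∫ θ in (0 : ℝ)..(2 * Real.pi),
          fb θ (h (Complex.exp (θ * I))) *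
            (((1 - ‖ζ‖ ^ 2) /
              (1 + ‖ζ‖ ^ 2 - 2 * (Complex.exp (-(θ : ℂ) * I) * ζ).re) : ℝ) : ℂ) := by
  obtain ⟨C, hC⟩ := isBounded_iff_forall_norm_le.mp hfb
  have hCf : ∀ z ∈ ball (0:ℂ) 1, ‖f z‖ ≤ C := fun z hz => hC _ (mem_image_of_mem f hz)
  obtain ⟨C', hC'⟩ := (isCompact_closedBall (0:ℂ) 1).exists_bound_of_continuousOn hc
  have hIoo : Ioo (0:ℝ) 1 ∈ nhdsWithin (1:ℝ) (Iio 1) :=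
    Ioo_mem_nhdsLT_of_mem (by constructor <;> norm_num)
  -- Part 1
  have part1 : ∀ᵐ θ : ℝ,
      Tendsto (fun r : ℝ =>
          f ((r : ℂ) * Complex.exp (θ * I)) (h ((r : ℂ) * Complex.exp (θ * I))))
        (nhdsWithin 1 (Iio 1)) (nhds (fb θ (h (Complex.exp (θ * I))))) := by
    filter_upwards [hlim] with θ hθ
    set e := Complex.exp ((θ:ℂ) * I) with he_def
    have he : ‖e‖ = 1 := Complex.norm_exp_ofReal_mul_I θ
    have hemem : e ∈ closedBall (0:ℂ) 1 := by
      simp [mem_closedBall_zero_iff, he]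
    have htend_re : Tendsto (fun r : ℝ => (r:ℂ) * e) (nhdsWithin 1 (Iio 1)) (nhds e) := by
      have h1 : Tendsto (fun r : ℝ => (r:ℂ)) (nhdsWithin (1:ℝ) (Iio 1)) (nhds (1:ℂ)) :=
        (Complex.continuous_ofReal.tendsto 1).mono_left nhdsWithin_le_nhds
      simpa using h1.mul_const e
    have hmemcb : ∀ᶠ r : ℝ in nhdsWithin 1 (Iio 1), (r:ℂ) * e ∈ closedBall (0:ℂ) 1 := by
      filter_upwards [hIoo] with r hr
      simp only [mem_closedBall_zero_iff, norm_mul, he, mul_one,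
        Complex.norm_real, Real.norm_eq_abs]
      rw [abs_of_pos hr.1]; exact hr.2.le
    have hhe : Tendsto (fun r : ℝ => h ((r:ℂ) * e)) (nhdsWithin 1 (Iio 1)) (nhds (h e)) :=
      (hc e hemem).tendsto.comp
        (tendsto_nhdsWithin_iff.mpr ⟨htend_re, hmemcb⟩)
    have hnorm1 : Tendsto (fun r : ℝ => ‖h ((r:ℂ) * e) - h e‖) (nhdsWithin 1 (Iio 1))
        (nhds 0) := by
      rw [← tendsto_iff_norm_sub_tendsto_zero] at *
      exact hhe
    have hnorm2 : Tendsto (fun r : ℝ => ‖f ((r:ℂ) * e) (h e) - fb θ (h e)‖)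
        (nhdsWithin 1 (Iio 1)) (nhds 0) := by
      rw [← tendsto_iff_norm_sub_tendsto_zero]
      exact hθ (h e)
    rw [tendsto_iff_norm_sub_tendsto_zero]
    apply squeeze_zero_norm'
      (a := fun r : ℝ => C * ‖h ((r:ℂ) * e) - h e‖ + ‖f ((r:ℂ) * e) (h e) - fb θ (h e)‖)
    · filter_upwards [hIoo] with r hr
      have hrb : (r:ℂ) * e ∈ ball (0:ℂ) 1 := by
        simp only [mem_ball_zero_iff, norm_mul, he, mul_one,
          Complex.norm_real, Real.norm_eq_abs]
        rw [abs_of_pos hr.1]; exact hr.2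
      have heq : f ((r:ℂ) * e) (h ((r:ℂ) * e)) - fb θ (h e) =
          f ((r:ℂ) * e) (h ((r:ℂ) * e) - h e) + (f ((r:ℂ) * e) (h e) - fb θ (h e)) := by
        rw [map_sub]; ring
      rw [norm_norm, heq]
      refine (norm_add_le _ _).trans (add_le_add ?_ le_rfl)
      calc ‖f ((r:ℂ) * e) (h ((r:ℂ) * e) - h e)‖
          ≤ ‖f ((r:ℂ) * e)‖ * ‖h ((r:ℂ) * e) - h e‖ := (f _).le_opNorm _
        _ ≤ C * ‖h ((r:ℂ) * e) - h e‖ :=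
          mul_le_mul_of_nonneg_right (hCf _ hrb) (norm_nonneg _)
    · simpa using (hnorm1.const_mul C).add hnorm2
  refine ⟨part1, ?_⟩
  -- Part 2
  intro ζ hζmem
  have hζ : ‖ζ‖ < 1 := by simpa [mem_ball_zero_iff] using hζmem
  set g : ℂ → ℂ := fun z => f z (h z) with hg_def
  have hg : DifferentiableOn ℂ g (ball 0 1) := hf.clm_apply hh
  have hgb : ∀ z ∈ ball (0:ℂ) 1, ‖g z‖ ≤ C * C' := by
    intro z hz
    calc ‖f z (h z)‖ ≤ ‖f z‖ * ‖h z‖ := (f z).le_opNorm _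
      _ ≤ C * C' := by
        have h1 := hCf z hz
        have h2 := hC' z (ball_subset_closedBall hz)
        have h3 : (0:ℝ) ≤ ‖f z‖ := norm_nonneg _
        nlinarith [norm_nonneg (h z)]
  set u : ℕ → ℝ := fun n => 1 - ((n:ℝ) + 2)⁻¹ with hu_def
  have hu01 : ∀ n, 0 < u n ∧ u n < 1 := by
    intro n
    have h2 : (0:ℝ) < (n:ℝ) + 2 := by positivity
    constructor
    · have : ((n:ℝ) + 2)⁻¹ ≤ 2⁻¹ := by
        apply inv_anti₀ <;> norm_num
      simp only [hu_def]; linarith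
    · simp only [hu_def]
      have : (0:ℝ) < ((n:ℝ) + 2)⁻¹ := by positivity
      linarith
  have hu : Tendsto u atTop (nhdsWithin 1 (Iio 1)) := by
    rw [tendsto_nhdsWithin_iff]
    constructor
    · have h0 : Tendsto (fun n : ℕ => ((n:ℝ) + 2)⁻¹) atTop (nhds 0) :=
        tendsto_inv_atTop_zero.comp
          (tendsto_atTop_add_const_right atTop 2 tendsto_natCast_atTop_atTop)
      simpa using tendsto_const_nhds.sub h0
    · exact Eventually.of_forall fun n => (hu01 n).2
  -- Poisson formula at each radius u n
  have habsu : ∀ (n : ℕ) (w : ℂ), ‖(u n : ℂ) * w‖ = u n * ‖w‖ := by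
    intro n w
    rw [norm_mul, Complex.norm_real, Real.norm_eq_abs, abs_of_pos (hu01 n).1]
  have hgn : ∀ n : ℕ, g ((u n : ℂ) * ζ) = (2 * Real.pi)⁻¹ *
      ∫ θ in (0 : ℝ)..(2 * Real.pi),
        g ((u n : ℂ) * Complex.exp (θ * I)) *
          (((1 - ‖ζ‖ ^ 2) /
            (1 + ‖ζ‖ ^ 2 - 2 * (Complex.exp (-(θ : ℂ) * I) * ζ).re) : ℝ) : ℂ) := by
    intro n
    obtain ⟨hun0, hun1⟩ := hu01 n
    have hinv0 : 0 < (u n)⁻¹ := inv_pos.mpr hun0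
    have hmul1 : u n * (u n)⁻¹ = 1 := mul_inv_cancel₀ (ne_of_gt hun0)
    have hR : (1:ℝ) < (u n)⁻¹ := by
      have := mul_lt_mul_of_pos_right hun1 hinv0
      rw [hmul1, one_mul] at this
      exact this
    have hGdiff : DifferentiableOn ℂ (fun w => g ((u n : ℂ) * w)) (ball 0 (u n)⁻¹) := by
      apply hg.comp ((differentiable_id.const_mul ((u n : ℂ))).differentiableOn)
      intro w hw
      rw [mem_ball_zero_iff] at hw ⊢
      rw [habsu]
      calc u n * ‖w‖ < u n * (u n)⁻¹ := by
            exact mul_lt_mul_of_pos_left hw hun0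
        _ = 1 := hmul1
    exact poissonFormula hR (fun w => g ((u n : ℂ) * w)) hGdiff hζ
  -- convergence of left sides
  have hLHS : Tendsto (fun n => g ((u n : ℂ) * ζ)) atTop (nhds (g ζ)) := by
    have hcont : ContinuousAt g ζ :=
      (hg.differentiableAt (isOpen_ball.mem_nhds hζmem)).continuousAt
    apply hcont.tendsto.comp
    have h1 : Tendsto (fun n => ((u n : ℝ) : ℂ)) atTop (nhds 1) := by
      have h2 : Tendsto u atTop (nhds (1:ℝ)) := hu.mono_right nhdsWithin_le_nhds
      have := (Complex.continuous_ofReal.tendsto (1:ℝ)).comp h2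
      simpa [Function.comp_def] using this
    simpa using h1.mul_const ζ
  -- dominated convergence for the right sides
  set P : ℝ → ℝ := fun θ => (1 - ‖ζ‖ ^ 2) /
    (1 + ‖ζ‖ ^ 2 - 2 * (Complex.exp (-(θ : ℂ) * I) * ζ).re) with hP_def
  have hPcont : Continuous P := by
    apply continuous_const.div
    · apply Continuous.sub (continuous_const)
      apply Continuous.mul continuous_const
      exact Complex.continuous_re.comp
        ((Complex.continuous_exp.comp ((Complex.continuous_ofReal.neg).mul continuous_const)).mul
          continuous_const)
    · exact fun θ => (denom_pos hζ θ).ne'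
  have hgcont : ∀ n : ℕ, Continuous fun θ : ℝ => g ((u n : ℂ) * Complex.exp (θ * I)) := by
    intro n
    apply hg.continuousOn.comp_continuous
    · exact continuous_const.mul (Complex.continuous_exp.comp
        (Complex.continuous_ofReal.mul continuous_const))
    · intro θ
      rw [mem_ball_zero_iff, habsu, Complex.norm_exp_ofReal_mul_I, mul_one]
      exact (hu01 n).2
  have hRHS : Tendsto (fun n => ∫ θ in (0 : ℝ)..(2 * Real.pi),
      g ((u n : ℂ) * Complex.exp (θ * I)) * ((P θ : ℝ) : ℂ)) atTop
      (nhds (∫ θ in (0 : ℝ)..(2 * Real.pi),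
        fb θ (h (Complex.exp (θ * I))) * ((P θ : ℝ) : ℂ))) := by
    apply intervalIntegral.tendsto_integral_filter_of_dominated_convergence
      (bound := fun θ => C * C' * |P θ|)
    · apply Eventually.of_forall
      intro n
      exact ((hgcont n).mul (Complex.continuous_ofReal.comp hPcont)).aestronglyMeasurable
    · apply Eventually.of_forall
      intro n
      apply MeasureTheory.ae_of_all
      intro θ _
      rw [norm_mul, Complex.norm_real, Real.norm_eq_abs]
      apply mul_le_mul_of_nonneg_right _ (abs_nonneg _)
      apply hgb
      rw [mem_ball_zero_iff, habsu, Complex.norm_exp_ofReal_mul_I, mul_one]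
      exact (hu01 n).2
    · exact (continuous_const.mul hPcont.abs).intervalIntegrable 0 (2 * Real.pi)
    · filter_upwards [part1] with θ hθ _
      exact (hθ.comp hu).mul_const _
  have hfinal : Tendsto (fun n => g ((u n : ℂ) * ζ)) atTop
      (nhds ((2 * Real.pi)⁻¹ * ∫ θ in (0 : ℝ)..(2 * Real.pi),
        fb θ (h (Complex.exp (θ * I))) *
          (((1 - ‖ζ‖ ^ 2) /
            (1 + ‖ζ‖ ^ 2 - 2 * (Complex.exp (-(θ : ℂ) * I) * ζ).re) : ℝ) : ℂ))) := by
    refine Tendsto.congr (fun n => (hgn n).symm) (hRHS.const_mul _)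
  exact tendsto_nhds_unique hLHS hfinal
end

section
/- Let X be a complex Banach space and φ : closed unit disc → closed unit ball of X a continuous map such that: (i) φ is holomorphic on 𝔻 with φ(𝔻) ⊆ B_X; (ii) ‖φ(e^{iθ})‖ = 1 for all θ; (iii) there is a bounded holomorphic h : 𝔻 → X* with weak* radial boundary values h(e^{iθ}) = e^{iθ} p(e^{iθ}) N_{φ(e^{iθ})} a.e., where p : ∂𝔻 → (0,∞) is measurable and N_{φ(e^{iθ})} ∈ X* is a supporting functional at φ(e^{iθ}) (⟨φ(e^{iθ}), N_{φ(e^{iθ})}⟩ = 1 and Re⟨z, N_{φ(e^{iθ})}⟩ < 1 for all z ∈ B_X). Then k_{B_X}(φ(0), φ'(0)) = 1, i.e., φ is a complex geodesic through φ(0) in the direction φ'(0). -/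
open Metric Set Complex Filter

open MeasureTheory in
section
lemma ptlim {X : Type*} [NormedAddCommGroup X] [NormedSpace ℂ X]
    (φ : ℂ → X) (hφc : ContinuousOn φ (closedBall 0 1))
    (h : ℂ → (X →L[ℂ] ℂ))
    (p : ℝ → ℝ) (hppos : ∀ θ, 0 < p θ)
    (N : ℝ → (X →L[ℂ] ℂ))
    (M : ℝ) (hM0 : 0 < M) (hMb : ∀ ζ ∈ ball (0:ℂ) 1, ‖h ζ‖ ≤ M)
    (u : ℂ → X)
    (q : ℂ → ℂ) (hqdef : q = fun ζ => (h ζ) (u ζ - φ ζ))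
    (Ψ : ℂ → ℂ)
    (hΨval : ∀ z : ℂ, z ≠ 0 → Ψ z = z⁻¹ * q z)
    (huc : ContinuousOn u (closedBall 0 1))
    (hum : MapsTo u (closedBall 0 1) (ball (0 : X) 1))
    (θ : ℝ)
    (hN1 : (N θ) (φ (Complex.exp (θ * I))) = 1)
    (hNlt : ∀ z ∈ ball (0 : X) 1, ((N θ) z).re < 1)
    (hNt : ∀ x : X, Tendsto (fun r : ℝ => h ((r : ℂ) * Complex.exp (θ * I)) x)
        (nhdsWithin 1 (Iio 1))
        (nhds (Complex.exp (θ * I) * (p θ : ℂ) * (N θ) x))) :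
    Tendsto (fun r : ℝ => (Ψ ((r:ℂ) * Complex.exp (θ * I))).re) (nhdsWithin 1 (Iio 1))
      (nhds (p θ * (((N θ) (u (Complex.exp (θ * I)))).re - 1))) ∧
    p θ * (((N θ) (u (Complex.exp (θ * I)))).re - 1) < 0 := by
  set e : ℂ := Complex.exp (θ * I) with hedef
  have he : ‖e‖ = 1 := norm_exp_ofReal_mul_I θ
  have he0 : e ≠ 0 := Complex.exp_ne_zero _
  have heC : e ∈ closedBall (0:ℂ) 1 := by simp [mem_closedBall, he]
  have hIoo : ∀ᶠ r in nhdsWithin (1:ℝ) (Iio 1), r ∈ Ioo (0:ℝ) 1 :=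
    Ioo_mem_nhdsLT_of_mem (by constructor <;> norm_num)
  have hmem : ∀ r : ℝ, r ∈ Ioo (0:ℝ) 1 → (r:ℂ) * e ∈ ball (0:ℂ) 1 := by
    intro r hr
    simp only [mem_ball, dist_zero_right, norm_mul, Complex.norm_real, he, mul_one,
      Real.norm_eq_abs, abs_of_pos hr.1]
    exact hr.2
  have T1 : Tendsto (fun r : ℝ => ((r:ℂ) * e)) (nhdsWithin 1 (Iio 1)) (nhds e) := by
    have := ((Complex.continuous_ofReal.tendsto 1).mono_left
      (nhdsWithin_le_nhds (s := Iio (1:ℝ)))).mul (tendsto_const_nhds (x := e))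
    simpa using this
  have T1c : Tendsto (fun r : ℝ => ((r:ℂ) * e)) (nhdsWithin 1 (Iio 1))
      (nhdsWithin e (closedBall 0 1)) := by
    rw [tendsto_nhdsWithin_iff]
    refine ⟨T1, hIoo.mono fun r hr => ?_⟩
    simp only [mem_closedBall, dist_zero_right, norm_mul, Complex.norm_real, he, mul_one,
      Real.norm_eq_abs, abs_of_pos hr.1]
    exact hr.2.le
  have hu_cont : Tendsto (fun r : ℝ => u ((r:ℂ)*e)) (nhdsWithin 1 (Iio 1)) (nhds (u e)) :=
    (huc e heC).tendsto.comp T1c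
  have hφ_cont : Tendsto (fun r : ℝ => φ ((r:ℂ)*e)) (nhdsWithin 1 (Iio 1)) (nhds (φ e)) :=
    (hφc e heC).tendsto.comp T1c
  -- generic part
  have hpart : ∀ w : ℂ → X, Tendsto (fun r : ℝ => w ((r:ℂ)*e)) (nhdsWithin 1 (Iio 1)) (nhds (w e)) →
      Tendsto (fun r : ℝ => h ((r:ℂ)*e) (w ((r:ℂ)*e))) (nhdsWithin 1 (Iio 1))
        (nhds (e * (p θ : ℂ) * (N θ) (w e))) := by
    intro w hw
    have t2 : Tendsto (fun r : ℝ => h ((r:ℂ)*e) (w ((r:ℂ)*e) - w e)) (nhdsWithin 1 (Iio 1))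
        (nhds 0) := by
      have hb : ∀ᶠ r : ℝ in nhdsWithin 1 (Iio 1),
          ‖h ((r:ℂ)*e) (w ((r:ℂ)*e) - w e)‖ ≤ M * ‖w ((r:ℂ)*e) - w e‖ := by
        filter_upwards [hIoo] with r hr
        exact ((h _).le_opNorm _).trans
          (mul_le_mul_of_nonneg_right (hMb _ (hmem r hr)) (norm_nonneg _))
      have ht : Tendsto (fun r : ℝ => M * ‖w ((r:ℂ)*e) - w e‖) (nhdsWithin 1 (Iio 1))
          (nhds 0) := by
        have h5 : Tendsto (fun r : ℝ => w ((r:ℂ)*e) - w e) (nhdsWithin 1 (Iio 1)) (nhds 0) := by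
          simpa using hw.sub (tendsto_const_nhds (x := w e))
        simpa using (h5.norm.const_mul M)
      exact squeeze_zero_norm' hb ht
    have := (hNt (w e)).add t2
    rw [add_zero] at this
    apply this.congr
    intro r
    rw [← map_add]
    congr 1
    abel
  have hq_lim : Tendsto (fun r : ℝ => q ((r:ℂ)*e)) (nhdsWithin 1 (Iio 1))
      (nhds (e * (p θ : ℂ) * ((N θ) (u e) - 1))) := by
    have h1 := hpart u hu_cont
    have h2 := hpart φ hφ_cont
    rw [hN1] at h2
    have := h1.sub h2
    rw [hqdef]
    simp only
    have heq : ∀ r : ℝ, h ((r:ℂ)*e) (u ((r:ℂ)*e)) - h ((r:ℂ)*e) (φ ((r:ℂ)*e))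
        = (h ((r:ℂ)*e)) (u ((r:ℂ)*e) - φ ((r:ℂ)*e)) := fun r => (map_sub (h _) _ _).symm
    have h3 := this.congr heq
    have : e * (p θ:ℂ) * (N θ) (u e) - e * (p θ:ℂ) * 1 = e * (p θ:ℂ) * ((N θ) (u e) - 1) := by ring
    rwa [this] at h3
  have hinv : Tendsto (fun r : ℝ => ((r:ℂ)*e)⁻¹) (nhdsWithin 1 (Iio 1)) (nhds e⁻¹) :=
    T1.inv₀ he0
  have hΨlim : Tendsto (fun r : ℝ => ((r:ℂ)*e)⁻¹ * q ((r:ℂ)*e)) (nhdsWithin 1 (Iio 1))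
      (nhds ((p θ : ℂ) * ((N θ) (u e) - 1))) := by
    have := hinv.mul hq_lim
    have heq : e⁻¹ * (e * (p θ:ℂ) * ((N θ) (u e) - 1)) = (p θ:ℂ) * ((N θ) (u e) - 1) := by
      field_simp
    rwa [heq] at this
  have hΨlim2 : Tendsto (fun r : ℝ => Ψ ((r:ℂ)*e)) (nhdsWithin 1 (Iio 1))
      (nhds ((p θ : ℂ) * ((N θ) (u e) - 1))) := by
    apply hΨlim.congr'
    filter_upwards [hIoo] with r hr
    have hz0 : (r:ℂ)*e ≠ 0 := by
      apply mul_ne_zero _ he0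
      simpa using hr.1.ne'
    rw [hΨval _ hz0]
  constructor
  · have := (Complex.continuous_re.tendsto _).comp hΨlim2
    convert this using 2
    simp [Complex.re_ofReal_mul, Complex.sub_re]
    rw [Complex.re_ofReal_mul, Complex.sub_re, Complex.one_re]
  · apply mul_neg_of_pos_of_neg (hppos θ)
    rw [sub_neg]
    exact hNlt (u e) (hum heC)

lemma meanvalue {Ψ : ℂ → ℂ} (hΨ : DifferentiableOn ℂ Ψ (ball 0 1)) {r : ℝ}
    (hr0 : 0 < r) (hr1 : r < 1) :
    ∫ θ in Ioc 0 (2*Real.pi), (Ψ ((r:ℂ) * Complex.exp (θ * I))).re = 2 * Real.pi * (Ψ 0).re := by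
  have hdc : DiffContOnCl ℂ Ψ (ball 0 r) := by
    apply DifferentiableOn.diffContOnCl
    rw [closure_ball (0:ℂ) hr0.ne']
    exact hΨ.mono (closedBall_subset_ball hr1)
  have key := hdc.circleIntegral_sub_inv_smul (w := 0) (mem_ball_self hr0)
  rw [circleIntegral] at key
  have hint : ∀ θ : ℝ, deriv (circleMap 0 r) θ •
      ((circleMap 0 r θ - 0)⁻¹ • Ψ (circleMap 0 r θ)) = I * Ψ ((r:ℂ) * Complex.exp (θ * I)) := by
    intro θ
    have hz : circleMap 0 r θ ≠ 0 := circleMap_ne_center hr0.ne'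
    have hc : circleMap 0 r θ = (r:ℂ) * Complex.exp (θ * I) := by simp [circleMap]
    rw [deriv_circleMap]
    rw [smul_eq_mul, smul_eq_mul, sub_zero, ← hc]
    field_simp
  simp only [hint] at key
  rw [intervalIntegral.integral_const_mul] at key
  have key2 : ∫ θ in (0:ℝ)..(2*Real.pi), Ψ ((r:ℂ) * Complex.exp (θ * I)) =
      (2*Real.pi : ℝ) * Ψ 0 := by
    apply mul_left_cancel₀ I_ne_zero
    rw [key]
    simp [smul_eq_mul]
    ring
  have hcont : Continuous fun θ : ℝ => Ψ ((r:ℂ) * Complex.exp (θ * I)) := by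
    apply hΨ.continuousOn.comp_continuous
    · exact (continuous_const.mul (Complex.continuous_exp.comp
        (Complex.continuous_ofReal.mul continuous_const)))
    · intro θ
      simp only [mem_ball, dist_zero_right, norm_mul, Complex.norm_real,
        norm_exp_ofReal_mul_I, mul_one, Real.norm_eq_abs, abs_of_pos hr0]
      exact hr1
  rw [intervalIntegral.integral_of_le (by positivity)] at key2
  have hInt : IntegrableOn (fun θ : ℝ => Ψ ((r:ℂ) * Complex.exp (θ * I)))
      (Ioc 0 (2*Real.pi)) := hcont.integrableOn_Ioc
  have := integral_re (μ := volume.restrict (Ioc 0 (2*Real.pi))) hInt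
  simp only [RCLike.re_to_complex] at this
  rw [this, key2]
  simp [Complex.re_ofReal_mul]

lemma keyA {X : Type*} [NormedAddCommGroup X] [NormedSpace ℂ X]
    (φ : ℂ → X) (hφc : ContinuousOn φ (closedBall 0 1))
    (hφd : DifferentiableOn ℂ φ (ball 0 1))
    (hφm : MapsTo φ (ball (0 : ℂ) 1) (ball (0 : X) 1))
    (h : ℂ → (X →L[ℂ] ℂ)) (hhd : DifferentiableOn ℂ h (ball 0 1))
    (hhb : Bornology.IsBounded (h '' ball 0 1))
    (p : ℝ → ℝ) (hppos : ∀ θ, 0 < p θ)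
    (N : ℝ → (X →L[ℂ] ℂ))
    (hsupp : ∀ᵐ θ : ℝ,
      (N θ) (φ (Complex.exp (θ * I))) = 1 ∧
      (∀ z ∈ ball (0 : X) 1, ((N θ) z).re < 1) ∧
      ∀ x : X, Tendsto (fun r : ℝ => h ((r : ℂ) * Complex.exp (θ * I)) x)
        (nhdsWithin 1 (Iio 1))
        (nhds (Complex.exp (θ * I) * (p θ : ℂ) * (N θ) x)))
    (u : ℂ → X) (hud : DifferentiableOn ℂ u (ball 0 1))
    (huc : ContinuousOn u (closedBall 0 1))
    (hum : MapsTo u (closedBall 0 1) (ball (0 : X) 1))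
    (hu0 : u 0 = φ 0) :
    ((h 0) (deriv u 0 - deriv φ 0)).re < 0 := by
  obtain ⟨M, hM1, hMb⟩ : ∃ M : ℝ, 1 ≤ M ∧ ∀ ζ ∈ ball (0:ℂ) 1, ‖h ζ‖ ≤ M := by
    obtain ⟨C, hC⟩ := isBounded_iff_forall_norm_le.1 hhb
    exact ⟨max C 1, le_max_right _ _,
      fun ζ hζ => (hC _ (mem_image_of_mem _ hζ)).trans (le_max_left _ _)⟩
  have hM0 : 0 < M := lt_of_lt_of_le one_pos hM1
  set q : ℂ → ℂ := fun ζ => (h ζ) (u ζ - φ ζ) with hqdef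
  have hq0 : q 0 = 0 := by simp [hqdef, hu0]
  have hqd : DifferentiableOn ℂ q (ball 0 1) := hhd.clm_apply (hud.sub hφd)
  set Ψ : ℂ → ℂ := dslope q 0 with hΨdef
  have h01 : (0:ℂ) ∈ ball (0:ℂ) 1 := mem_ball_self one_pos
  have hball : ball (0:ℂ) 1 ∈ nhds (0:ℂ) := isOpen_ball.mem_nhds h01
  have hΨd : DifferentiableOn ℂ Ψ (ball 0 1) :=
    (differentiableOn_dslope hball).2 hqd
  have hΨ0 : Ψ 0 = (h 0) (deriv u 0 - deriv φ 0) := by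
    have h1 : HasDerivAt h (deriv h 0) 0 := (hhd.differentiableAt hball).hasDerivAt
    have h2 : HasDerivAt (fun ζ => u ζ - φ ζ) (deriv u 0 - deriv φ 0) 0 :=
      (hud.differentiableAt hball).hasDerivAt.sub (hφd.differentiableAt hball).hasDerivAt
    have h3 := h1.clm_apply h2
    rw [hΨdef, dslope_same, h3.deriv]
    simp [hu0]
  -- bound on Ψ
  have hqbound : ∀ z ∈ ball (0:ℂ) 1, ‖q z‖ ≤ 2 * M := by
    intro z hz
    calc ‖q z‖ ≤ ‖h z‖ * ‖u z - φ z‖ := (h z).le_opNorm _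
    _ ≤ M * 2 := by
        apply mul_le_mul (hMb z hz) ?_ (norm_nonneg _) hM0.le
        have h1 : ‖u z‖ ≤ 1 := le_of_lt (by simpa using hum (ball_subset_closedBall hz))
        have h2 : ‖φ z‖ ≤ 1 := le_of_lt (by simpa using hφm hz)
        calc ‖u z - φ z‖ ≤ ‖u z‖ + ‖φ z‖ := norm_sub_le _ _
        _ ≤ 2 := by linarith
    _ = 2 * M := by ring
  have hΨval : ∀ z : ℂ, z ≠ 0 → Ψ z = z⁻¹ * q z := by
    intro z hz
    rw [hΨdef, dslope_of_ne q hz, slope_def_field, hq0, sub_zero, sub_zero, div_eq_inv_mul]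
  have hΨbound : ∀ z ∈ ball (0:ℂ) 1, (1/2 : ℝ) ≤ ‖z‖ → ‖Ψ z‖ ≤ 4 * M := by
    intro z hz hhalf
    have hz0 : z ≠ 0 := by
      intro hzz; rw [hzz] at hhalf; norm_num at hhalf
    rw [hΨval z hz0]
    rw [norm_mul, norm_inv]
    have h2 : ‖z‖⁻¹ ≤ 2 := by
      rw [inv_le_comm₀ (norm_pos_iff.2 hz0) (by norm_num)]
      linarith
    calc ‖z‖⁻¹ * ‖q z‖ ≤ 2 * (2*M) := by
          apply mul_le_mul h2 (hqbound z hz) (norm_nonneg _) (by norm_num)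
    _ = 4 * M := by ring
  -- the limit function
  set L : ℝ → ℝ := fun θ => p θ * (((N θ) (u (Complex.exp (θ * I)))).re - 1) with hLdef
  have hae : ∀ᵐ θ : ℝ, Tendsto (fun r : ℝ => (Ψ ((r:ℂ) * Complex.exp (θ * I))).re)
      (nhdsWithin 1 (Iio 1)) (nhds (L θ)) ∧ L θ < 0 := by
    filter_upwards [hsupp] with θ hθ
    exact ptlim φ hφc h p hppos N M hM0 hMb u q hqdef Ψ hΨval huc hum θ hθ.1 hθ.2.1 hθ.2.2
  have hIoo2 : ∀ᶠ r in nhdsWithin (1:ℝ) (Iio 1), r ∈ Ioo (1/2 : ℝ) 1 :=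
    Ioo_mem_nhdsLT_of_mem (by constructor <;> norm_num)
  have hmem2 : ∀ r ∈ Ioo (1/2:ℝ) 1, ∀ θ : ℝ, (r:ℂ) * Complex.exp (θ * I) ∈ ball (0:ℂ) 1 ∧
      (1/2:ℝ) ≤ ‖(r:ℂ) * Complex.exp (θ * I)‖ := by
    intro r hr θ
    have : ‖(r:ℂ) * Complex.exp (θ * I)‖ = r := by
      simp [norm_mul, norm_exp_ofReal_mul_I, abs_of_pos (by linarith [hr.1] : (0:ℝ) < r)]
    constructor
    · simp only [mem_ball, dist_zero_right, this]; exact hr.2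
    · rw [this]; exact hr.1.le
  have hFbound : ∀ᶠ (r : ℝ) in nhdsWithin (1:ℝ) (Iio 1), ∀ θ : ℝ,
      |(Ψ ((r:ℂ) * Complex.exp (θ * I))).re| ≤ 4 * M := by
    filter_upwards [hIoo2] with r hr θ
    exact (Complex.abs_re_le_norm _).trans
      (hΨbound _ (hmem2 r hr θ).1 (hmem2 r hr θ).2)
  -- |L| ≤ 4M a.e.
  have haeL : ∀ᵐ θ : ℝ, |L θ| ≤ 4 * M := by
    filter_upwards [hae] with θ hθ
    exact le_of_tendsto hθ.1.abs (hFbound.mono fun r hr => hr θ)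
  -- measure
  set μ : MeasureTheory.Measure ℝ := volume.restrict (Ioc 0 (2*Real.pi)) with hμdef
  have hcont2 : ∀ r ∈ Ico (0:ℝ) 1, Continuous fun θ : ℝ => (Ψ ((r:ℂ) * Complex.exp (θ * I))).re := by
    intro r hr
    apply Complex.continuous_re.comp
    apply hΨd.continuousOn.comp_continuous
    · exact (continuous_const.mul (Complex.continuous_exp.comp
        (Complex.continuous_ofReal.mul continuous_const)))
    · intro θ
      simp only [mem_ball, dist_zero_right, norm_mul, Complex.norm_real,
        norm_exp_ofReal_mul_I, mul_one, Real.norm_eq_abs, _root_.abs_of_nonneg hr.1]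
      exact hr.2
  -- L is a.e. strongly measurable
  have hLmeas : AEStronglyMeasurable L μ := by
    set v : ℕ → ℝ := fun n => 1 - 1/((n:ℝ)+1) with hvdef
    have hv1 : ∀ n : ℕ, v n ∈ Ico (0:ℝ) 1 := by
      intro n
      have hn2 : (0:ℝ) < (n:ℝ) + 1 := by positivity
      have h1 : (1:ℝ)/((n:ℝ)+1) ≤ 1 := by
        rw [div_le_one hn2]
        have : (0:ℝ) ≤ (n:ℝ) := Nat.cast_nonneg n
        linarith
      have h2 : (0:ℝ) < 1/((n:ℝ)+1) := by positivity
      constructor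
      · simp only [hvdef]; linarith
      · simp only [hvdef]; linarith
    have hv : Tendsto v atTop (nhdsWithin (1:ℝ) (Iio 1)) := by
      apply tendsto_nhdsWithin_of_tendsto_nhds_of_eventually_within
      · have h0 := tendsto_one_div_add_atTop_nhds_zero_nat (𝕜 := ℝ)
        have h1 := (tendsto_const_nhds (x := (1:ℝ)) (f := (atTop : Filter ℕ))).sub h0
        simpa [hvdef, one_div] using h1
      · refine Eventually.of_forall fun n => (hv1 n).2
    have hmeas : ∀ n : ℕ, AEStronglyMeasurable
        (fun θ : ℝ => (Ψ ((v n : ℂ) * Complex.exp (θ * I))).re) μ := fun n =>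
      (hcont2 (v n) (hv1 n)).aestronglyMeasurable
    have hlim2 : ∀ᵐ (θ : ℝ) ∂μ, Tendsto (fun n : ℕ => (Ψ ((v n : ℂ) * Complex.exp ((θ:ℝ) * I))).re)
        atTop (nhds (L θ)) := by
      filter_upwards [ae_restrict_of_ae hae] with θ hθ
      exact hθ.1.comp hv
    exact aestronglyMeasurable_of_tendsto_ae atTop hmeas hlim2
  -- integrability of L
  have hLint : Integrable L μ := by
    apply Integrable.mono' (g := fun _ => 4*M) _ hLmeas
    · filter_upwards [ae_restrict_of_ae haeL] with θ hθ
      simpa using hθ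
    · rw [integrable_const_iff]
      right
      infer_instance
  -- dominated convergence
  have hDCT : Tendsto (fun r : ℝ => ∫ θ, (Ψ ((r:ℂ) * Complex.exp (θ * I))).re ∂μ)
      (nhdsWithin 1 (Iio 1)) (nhds (∫ θ, L θ ∂μ)) := by
    apply tendsto_integral_filter_of_dominated_convergence (bound := fun _ => 4*M)
    · filter_upwards [Ioo_mem_nhdsLT_of_mem (show (1:ℝ) ∈ Ioc 0 1 by constructor <;> norm_num)]
        with r hr
      exact (hcont2 r ⟨hr.1.le, hr.2⟩).aestronglyMeasurable
    · filter_upwards [hFbound] with r hr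
      exact Eventually.of_forall fun θ => by simpa using hr θ
    · rw [integrable_const_iff]
      right
      infer_instance
    · filter_upwards [ae_restrict_of_ae hae] with θ hθ
      exact hθ.1
  -- the integrals are constant = 2π (Ψ 0).re
  have hconst : (fun r : ℝ => ∫ θ, (Ψ ((r:ℂ) * Complex.exp (θ * I))).re ∂μ)
      =ᶠ[nhdsWithin (1:ℝ) (Iio 1)] (fun _ => 2*Real.pi*(Ψ 0).re) := by
    filter_upwards [Ioo_mem_nhdsLT_of_mem (show (1:ℝ) ∈ Ioc 0 1 by constructor <;> norm_num)]
      with r hr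
    exact meanvalue hΨd hr.1 hr.2
  have hEq : ∫ θ, L θ ∂μ = 2*Real.pi*(Ψ 0).re := by
    have h1 : Tendsto (fun r : ℝ => ∫ θ, (Ψ ((r:ℂ) * Complex.exp (θ * I))).re ∂μ)
        (nhdsWithin 1 (Iio 1)) (nhds (2*Real.pi*(Ψ 0).re)) :=
      Tendsto.congr' hconst.symm tendsto_const_nhds
    exact tendsto_nhds_unique hDCT h1
  -- strict negativity of ∫ L
  have hLneg : ∫ θ, L θ ∂μ < 0 := by
    have haeμ : ∀ᵐ θ ∂μ, L θ < 0 := (ae_restrict_of_ae hae).mono fun θ hθ => hθ.2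
    have hpos : 0 < ∫ θ, -(L θ) ∂μ := by
      refine (integral_pos_iff_support_of_nonneg_ae
        (haeμ.mono fun θ hθ => by simp only [Pi.zero_apply, Pi.neg_apply]; linarith)
        hLint.neg).mpr ?_
      have hcompl : μ ((Function.support fun θ => -L θ)ᶜ) = 0 := by
        apply measure_mono_null _ (ae_iff.1 haeμ)
        intro θ hθ
        simp only [Function.mem_support, not_not, mem_compl_iff] at hθ ⊢
        intro hc
        simp only [neg_eq_zero] at hθ
        rw [hθ] at hc
        exact lt_irrefl 0 hc
      have huniv : μ univ ≤ μ (Function.support fun θ => -L θ) := by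
        calc μ univ = μ ((Function.support fun θ => -L θ) ∪ (Function.support fun θ => -L θ)ᶜ) := by
              rw [union_compl_self]
        _ ≤ μ (Function.support fun θ => -L θ) + μ ((Function.support fun θ => -L θ)ᶜ) :=
              measure_union_le _ _
        _ = μ (Function.support fun θ => -L θ) := by rw [hcompl, add_zero]
      apply lt_of_lt_of_le _ huniv
      rw [hμdef, Measure.restrict_apply_univ, Real.volume_Ioc]
      simp [Real.pi_pos]
    rw [integral_neg] at hpos
    linarith
  rw [← hΨ0]
  nlinarith [Real.pi_pos, hEq ▸ hLneg]
end

/-- The Kobayashi infinitesimal metric `k_{B_X}(p, v)` on the open unit ball. -/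
noncomputable def kobInfBall {X : Type*} [NormedAddCommGroup X] [NormedSpace ℂ X]
    (p v : X) : ℝ :=
  sInf {η : ℝ | 0 < η ∧ ∃ g : ℂ → X, DifferentiableOn ℂ g (ball 0 1) ∧
    MapsTo g (ball (0 : ℂ) 1) (ball (0 : X) 1) ∧ g 0 = p ∧
    η • derivWithin g (ball 0 1) 0 = v}

theorem stmt11 {X : Type*} [NormedAddCommGroup X] [NormedSpace ℂ X]
    (φ : ℂ → X) (hφc : ContinuousOn φ (closedBall 0 1))
    (hφd : DifferentiableOn ℂ φ (ball 0 1))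
    (hφm : MapsTo φ (ball (0 : ℂ) 1) (ball (0 : X) 1))
    (hφb : ∀ θ : ℝ, ‖φ (Complex.exp (θ * I))‖ = 1)
    (h : ℂ → (X →L[ℂ] ℂ)) (hhd : DifferentiableOn ℂ h (ball 0 1))
    (hhb : Bornology.IsBounded (h '' ball 0 1))
    (p : ℝ → ℝ) (hp : Measurable p) (hppos : ∀ θ, 0 < p θ)
    (N : ℝ → (X →L[ℂ] ℂ))
    (hsupp : ∀ᵐ θ : ℝ,
      (N θ) (φ (Complex.exp (θ * I))) = 1 ∧
      (∀ z ∈ ball (0 : X) 1, ((N θ) z).re < 1) ∧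
      ∀ x : X, Tendsto (fun r : ℝ => h ((r : ℂ) * Complex.exp (θ * I)) x)
        (nhdsWithin 1 (Iio 1))
        (nhds (Complex.exp (θ * I) * (p θ : ℂ) * (N θ) x))) :
    kobInfBall (φ 0) (derivWithin φ (ball 0 1) 0) = 1 := by
  have h01 : (0:ℂ) ∈ ball (0:ℂ) 1 := mem_ball_self one_pos
  have hball : ball (0:ℂ) 1 ∈ nhds (0:ℂ) := isOpen_ball.mem_nhds h01
  have hdw : derivWithin φ (ball (0:ℂ) 1) 0 = deriv φ 0 := derivWithin_of_isOpen isOpen_ball h01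
  -- step 1 : Re c > 0 where c = h 0 (deriv φ 0)
  have hc : 0 < ((h 0) (deriv φ 0)).re := by
    have := keyA φ hφc hφd hφm h hhd hhb p hppos N hsupp (fun _ => φ 0)
      (differentiableOn_const _) (continuousOn_const)
      (fun z _ => hφm h01) rfl
    rw [deriv_const] at this
    rw [zero_sub, map_neg] at this
    simpa using this
  -- membership of 1
  have hmem1 : (1:ℝ) ∈ {η : ℝ | 0 < η ∧ ∃ g : ℂ → X, DifferentiableOn ℂ g (ball 0 1) ∧
      MapsTo g (ball (0 : ℂ) 1) (ball (0 : X) 1) ∧ g 0 = φ 0 ∧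
      η • derivWithin g (ball 0 1) 0 = derivWithin φ (ball 0 1) 0} :=
    ⟨one_pos, φ, hφd, hφm, rfl, one_smul _ _⟩
  -- lower bound
  have hlb : ∀ η ∈ {η : ℝ | 0 < η ∧ ∃ g : ℂ → X, DifferentiableOn ℂ g (ball 0 1) ∧
      MapsTo g (ball (0 : ℂ) 1) (ball (0 : X) 1) ∧ g 0 = φ 0 ∧
      η • derivWithin g (ball 0 1) 0 = derivWithin φ (ball 0 1) 0}, (1:ℝ) ≤ η := by
    rintro η ⟨hη, g, hgd, hgm, hg0, hgder⟩
    by_contra hlt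
    push_neg at hlt
    set s : ℝ := (1+η)/2 with hsdef
    have hs0 : 0 < s := by simp only [hsdef]; linarith
    have hs1 : s < 1 := by simp only [hsdef]; linarith
    have hsη : η < s := by simp only [hsdef]; linarith
    set u : ℂ → X := fun ζ => g ((s:ℂ) * ζ) with hudef
    have hmap : ∀ ζ : ℂ, ζ ∈ closedBall (0:ℂ) 1 → (s:ℂ) * ζ ∈ ball (0:ℂ) 1 := by
      intro ζ hζ
      simp only [mem_closedBall, dist_zero_right] at hζ
      simp only [mem_ball, dist_zero_right, norm_mul, Complex.norm_real, Real.norm_eq_abs,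
        abs_of_pos hs0]
      calc s * ‖ζ‖ ≤ s * 1 := by
            apply mul_le_mul_of_nonneg_left hζ hs0.le
      _ = s := mul_one s
      _ < 1 := hs1
    have hsmul_cont : Continuous fun ζ : ℂ => (s:ℂ) * ζ := continuous_const.mul continuous_id
    have hud : DifferentiableOn ℂ u (ball 0 1) := by
      apply DifferentiableOn.comp hgd ((differentiable_const _).mul differentiable_id).differentiableOn
      exact fun ζ hζ => hmap ζ (ball_subset_closedBall hζ)
    have huc : ContinuousOn u (closedBall 0 1) := by
      apply ContinuousOn.comp hgd.continuousOn hsmul_cont.continuousOn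
      exact fun ζ hζ => hmap ζ hζ
    have hum : MapsTo u (closedBall 0 1) (ball (0 : X) 1) := fun ζ hζ => hgm (hmap ζ hζ)
    have hu0 : u 0 = φ 0 := by simp only [hudef, mul_zero]; exact hg0
    have hder : deriv u 0 = (s:ℂ) • deriv g 0 := by
      have hg' : HasDerivAt g (deriv g 0) ((fun ζ : ℂ => (s:ℂ) * ζ) 0) := by
        simp only [mul_zero]
        exact (hgd.differentiableAt hball).hasDerivAt
      have hin : HasDerivAt (fun ζ : ℂ => (s:ℂ) * ζ) (s:ℂ) 0 := by
        simpa using (hasDerivAt_id (0:ℂ)).const_mul (s:ℂ)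
      exact (HasDerivAt.scomp 0 hg' hin).deriv
    have := keyA φ hφc hφd hφm h hhd hhb p hppos N hsupp u hud huc hum hu0
    rw [hder] at this
    -- deriv g 0 = η⁻¹ • deriv φ 0
    have hdwg : derivWithin g (ball (0:ℂ) 1) 0 = deriv g 0 :=
      derivWithin_of_isOpen isOpen_ball h01
    rw [hdwg, hdw] at hgder
    have hgη : deriv g 0 = (η : ℝ)⁻¹ • deriv φ 0 := by
      rw [← hgder, smul_smul, inv_mul_cancel₀ hη.ne', one_smul]
    rw [hgη] at this
    have heq2 : (s:ℂ) • (η:ℝ)⁻¹ • deriv φ 0 - deriv φ 0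
        = (((s/η - 1 : ℝ)) : ℂ) • deriv φ 0 := by
      rw [← Complex.coe_smul, smul_smul]
      have hmul : ((s:ℂ) * ((η⁻¹:ℝ):ℂ)) = ((s/η - 1 : ℝ):ℂ) + 1 := by
        push_cast
        have : (η:ℂ) ≠ 0 := by
          simp only [ne_eq, Complex.ofReal_eq_zero]
          exact hη.ne'
        field_simp
        ring
      rw [hmul, add_smul, one_smul, add_sub_cancel_right]
    rw [heq2, _root_.map_smul, smul_eq_mul, Complex.re_ofReal_mul] at this
    have hneg : s/η - 1 < 0 := by nlinarith [hc]
    have hslt : s < η := (div_lt_one hη).1 (by linarith)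
    linarith
  apply le_antisymm
  · exact csInf_le ⟨0, fun x hx => le_of_lt hx.1⟩ hmem1
  · exact le_csInf ⟨1, hmem1⟩ hlb
end

section
/- Let 1 ≤ p < ∞ and let φ : 𝔻 → ℓ^p be defined coordinatewise by φ_j(ζ) = c_j ((ζ − α_j)/(1 − ᾱ_j ζ))^{β_j} ((1 − ᾱ_j ζ)/(1 − γ̄ ζ))^{2/p}, where γ ∈ 𝔻, |α_j| ≤ 1 (with |α_j| < 1 whenever β_j = 1), β_j ∈ {0,1}, Σ_j |c_j|^p (1 + |α_j|²) = 1 + |γ|², and Σ_j |c_j|^p α_j = γ. Then for every θ ∈ ℝ, the boundary value satisfies ‖φ(e^{iθ})‖_p = 1, i.e., Σ_j |φ_j(e^{iθ})|^p = 1. -/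
open Metric Set Complex

theorem stmt12 (p : ℝ) (hp1 : 1 ≤ p)
    (c α : ℕ → ℂ) (β : ℕ → ℕ) (γ : ℂ) (hγ : ‖γ‖ < 1)
    (hβ : ∀ j, β j = 0 ∨ β j = 1)
    (hα : ∀ j, ‖α j‖ ≤ 1)
    (hαβ : ∀ j, β j = 1 → ‖α j‖ < 1)
    (hsum1 : Summable fun j => ‖c j‖ ^ p * (1 + ‖α j‖ ^ 2))
    (h1 : ∑' j, ‖c j‖ ^ p * (1 + ‖α j‖ ^ 2)
      = 1 + ‖γ‖ ^ 2)
    (hsum2 : Summable fun j => ((‖c j‖ ^ p : ℝ) : ℂ) * α j)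
    (h2 : ∑' j, ((‖c j‖ ^ p : ℝ) : ℂ) * α j = γ)
    (φ : ℕ → ℂ → ℂ)
    (hφ : ∀ j ζ, φ j ζ = c j *
      ((ζ - α j) / (1 - (starRingEnd ℂ) (α j) * ζ)) ^ (β j) *
      (((1 - (starRingEnd ℂ) (α j) * ζ) / (1 - (starRingEnd ℂ) γ * ζ)) ^ ((2 / p : ℂ)))) :
    ∀ θ : ℝ, ∑' j, ‖φ j (Complex.exp (θ * I))‖ ^ p = 1 := by
  intro θ
  set z : ℂ := Complex.exp (θ * I) with hzdef
  have hp0 : (0:ℝ) < p := lt_of_lt_of_le one_pos hp1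
  have h2pne : (2/p : ℝ) ≠ 0 := by positivity
  have hz : ‖z‖ = 1 := by
    rw [hzdef]; exact Complex.norm_exp_ofReal_mul_I θ
  have hzz : z * (starRingEnd ℂ) z = 1 := by
    rw [Complex.mul_conj]
    norm_cast
    rw [← Complex.sq_norm, hz]; norm_num
  -- denominator nonzero
  have hden : (1 : ℂ) - (starRingEnd ℂ) γ * z ≠ 0 := by
    intro h
    have h' : ‖(starRingEnd ℂ) γ * z‖ = 1 := by
      have : (starRingEnd ℂ) γ * z = 1 := by linear_combination -h
      rw [this]; simp
    rw [norm_mul, Complex.norm_conj, hz, mul_one] at h'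
    exact absurd h' (ne_of_lt hγ)
  have habsq : ∀ w : ℂ, ‖1 - (starRingEnd ℂ) w * z‖ ^ 2
      = 1 + ‖w‖ ^ 2 - 2 * ((starRingEnd ℂ) w * z).re := by
    intro w
    rw [Complex.sq_norm, Complex.normSq_sub]
    simp [Complex.normSq_eq_norm_sq, hz, Complex.norm_conj]
  have hDpos : 0 < ‖1 - (starRingEnd ℂ) γ * z‖ ^ 2 :=
    pow_pos (norm_pos_iff.mpr hden) 2
  -- per-term computation
  have key : ∀ j, ‖φ j z‖ ^ p
      = ‖c j‖ ^ p * ‖1 - (starRingEnd ℂ) (α j) * z‖ ^ 2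
        / ‖1 - (starRingEnd ℂ) γ * z‖ ^ 2 := by
    intro j
    have h2p : ((2 / p : ℂ)) = (((2 / p : ℝ) : ℂ)) := by push_cast; ring
    rw [hφ, h2p, norm_mul, norm_mul, Complex.norm_cpow_real, norm_div]
    by_cases hA : (1 : ℂ) - (starRingEnd ℂ) (α j) * z = 0
    · rw [hA]
      simp [Real.zero_rpow h2pne, Real.zero_rpow (ne_of_gt hp0)]
    · have hAabs : ‖1 - (starRingEnd ℂ) (α j) * z‖ ≠ 0 :=
        norm_ne_zero_iff.mpr hA
      have hBl : ‖((z - α j) / (1 - (starRingEnd ℂ) (α j) * z)) ^ β j‖ = 1 := by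
        rcases hβ j with h | h
        · rw [h]; simp
        · rw [h, pow_one, norm_div]
          have heq : ‖z - α j‖ = ‖1 - (starRingEnd ℂ) (α j) * z‖ := by
            have h3 : (1 : ℂ) - (starRingEnd ℂ) (α j) * z
                = z * (starRingEnd ℂ) (z - α j) := by
              rw [map_sub, mul_sub, hzz]; ring
            rw [h3, norm_mul, hz, one_mul, Complex.norm_conj]
          rw [heq, div_self hAabs]
      rw [hBl, mul_one]
      have habs0 : 0 ≤ ‖c j‖ := norm_nonneg _
      have habs1 : (0:ℝ) ≤ ‖1 - (starRingEnd ℂ) (α j) * z‖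
          / ‖1 - (starRingEnd ℂ) γ * z‖ := by positivity
      rw [Real.mul_rpow habs0 (Real.rpow_nonneg habs1 _),
        ← Real.rpow_mul habs1, div_mul_cancel₀ _ (ne_of_gt hp0),
        show ((2:ℝ)) = ((2:ℕ):ℝ) by norm_num, Real.rpow_natCast, div_pow, mul_div_assoc]
  -- sums
  have hS1 : HasSum (fun j => ‖c j‖ ^ p * (1 + ‖α j‖ ^ 2))
      (1 + ‖γ‖ ^ 2) := h1 ▸ hsum1.hasSum
  have hS2 : HasSum
      (fun j => ((starRingEnd ℂ) (((‖c j‖ ^ p : ℝ) : ℂ) * α j) * z).re)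
      (((starRingEnd ℂ) γ * z).re) :=
    Complex.hasSum_re ((Complex.hasSum_conj'.mpr (h2 ▸ hsum2.hasSum)).mul_right z)
  have hN : HasSum
      (fun j => ‖c j‖ ^ p * ‖1 - (starRingEnd ℂ) (α j) * z‖ ^ 2)
      (‖1 - (starRingEnd ℂ) γ * z‖ ^ 2) := by
    rw [habsq γ]
    have h := hS1.sub (hS2.mul_left 2)
    convert h using 1
    · rfl
    funext j
    rw [habsq (α j)]
    simp only [map_mul, Complex.conj_ofReal]
    rw [show ((((‖c j‖ ^ p : ℝ) : ℂ)) * (starRingEnd ℂ) (α j) * z).re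
        = ‖c j‖ ^ p * ((starRingEnd ℂ) (α j) * z).re by
      rw [mul_assoc]; simp [Complex.mul_re]]
    ring
  calc ∑' j, ‖φ j z‖ ^ p
      = ∑' j, ‖c j‖ ^ p * ‖1 - (starRingEnd ℂ) (α j) * z‖ ^ 2
        / ‖1 - (starRingEnd ℂ) γ * z‖ ^ 2 := tsum_congr key
    _ = (∑' j, ‖c j‖ ^ p * ‖1 - (starRingEnd ℂ) (α j) * z‖ ^ 2)
        / ‖1 - (starRingEnd ℂ) γ * z‖ ^ 2 := tsum_div_const
    _ = 1 := by rw [hN.tsum_eq, div_self (ne_of_gt hDpos)]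
end
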